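/- arXiv:2302.06838 — 12 statements merged into one kernel-verified Lean document; each statement's English description precedes it below -/
import Mathlib

section
/- Weak Wolfe duality: for every feasible point y of the primal problem (i.e., g(y) ≤ 0 and h(y) = 0) and every feasible point (z, u, v) of the Wolfe dual (i.e., ∇f(z) + ∇g(z)ᵀu + ∇h(z)ᵀv = 0 and u ≥ 0), one has f(y) ≥ L(z, u, v) = f(z) + uᵀg(z) + vᵀh(z), provided that for each fixed (u, v) with u ≥ 0 the Lagrangian L(·, u, v) is pseudoconvex on the union of the primal feasible set Y and the set Z(u,v) = {z : ∇_z L(z,u,v) = 0}. -/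
open scoped BigOperators

/-- Weak Wolfe duality: if, for each `u ≥ 0` and `v`, the Lagrangian
`L(·,u,v) = f + uᵀg + vᵀh` is pseudoconvex on `Y ∪ Z(u,v)`, then for every
primal feasible `y` and every Wolfe-dual feasible `(z,u,v)` one has
`f(y) ≥ L(z,u,v)`. -/
theorem weak_wolfe_duality
    {m p q : ℕ}
    (f : (Fin m → ℝ) → ℝ)
    (g : (Fin m → ℝ) → Fin p → ℝ)
    (h : (Fin m → ℝ) → Fin q → ℝ)
    (hf : Differentiable ℝ f)
    (hg : ∀ i, Differentiable ℝ (fun z => g z i))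
    (hh : ∀ j, Differentiable ℝ (fun z => h z j))
    (L : (Fin m → ℝ) → (Fin p → ℝ) → (Fin q → ℝ) → ℝ)
    (hL : ∀ z u v, L z u v = f z + (∑ i, u i * g z i) + (∑ j, v j * h z j))
    (Y : Set (Fin m → ℝ))
    (hY : Y = {y | (∀ i, g y i ≤ 0) ∧ (∀ j, h y j = 0)})
    -- pseudoconvexity of `L(·,u,v)` on `Y ∪ Z(u,v)` for every `u ≥ 0`, `v`
    (hpc : ∀ (u : Fin p → ℝ) (v : Fin q → ℝ), (∀ i, 0 ≤ u i) →
      ∀ y₁ y₂,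
        y₁ ∈ Y ∪ {z | fderiv ℝ (fun z' => L z' u v) z = 0} →
        y₂ ∈ Y ∪ {z | fderiv ℝ (fun z' => L z' u v) z = 0} →
        0 ≤ fderiv ℝ (fun z' => L z' u v) y₂ (y₁ - y₂) →
        L y₂ u v ≤ L y₁ u v) :
    ∀ y, y ∈ Y →
      ∀ z u v, fderiv ℝ (fun z' => L z' u v) z = 0 → (∀ i, 0 ≤ u i) →
        L z u v ≤ f y := by
  intro y hy z u v hz hu
  have h1 : L z u v ≤ L y u v :=
    hpc u v hu y z (Or.inl hy) (Or.inr hz) (by rw [hz]; simp)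
  refine h1.trans ?_
  rw [hL]
  subst hY
  obtain ⟨hgy, hhy⟩ := hy
  have h2 : ∑ i, u i * g y i ≤ 0 :=
    Finset.sum_nonpos fun i _ => mul_nonpos_of_nonneg_of_nonpos (hu i) (hgy i)
  have h3 : ∑ j, v j * h y j = 0 := by
    simp [hhy]
  linarith
end

section
/- Strong Wolfe duality: suppose L(·,u,v) is pseudoconvex on Y ∪ Z(u,v) for every u ≥ 0 and v, and suppose ȳ is an optimal solution of the primal problem (P) at which the KKT conditions hold, i.e., there exist ū ≥ 0 and v̄ with ∇f(ȳ) + ∇g(ȳ)ᵀū + ∇h(ȳ)ᵀv̄ = 0 and ūᵀg(ȳ) = 0. Then (ȳ, ū, v̄) is an optimal solution of the Wolfe dual (WD) and the optimal values coincide: f(ȳ) = L(ȳ, ū, v̄) = max over (z,u,v) ∈ W of L(z,u,v). -/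
open scoped BigOperators

/-- Strong Wolfe duality: if `L(·,u,v)` is pseudoconvex on `Y ∪ Z(u,v)` for all
`u ≥ 0`, `v`, and `ȳ` is an optimal solution of the primal problem at which the
KKT conditions hold with multipliers `(ū, v̄)`, then `(ȳ, ū, v̄)` is optimal for
the Wolfe dual and the optimal values coincide. -/
theorem strong_wolfe_duality
    {m p q : ℕ}
    (f : (Fin m → ℝ) → ℝ)
    (g : (Fin m → ℝ) → Fin p → ℝ)
    (h : (Fin m → ℝ) → Fin q → ℝ)
    (hf : Differentiable ℝ f)
    (hg : ∀ i, Differentiable ℝ (fun z => g z i))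
    (hh : ∀ j, Differentiable ℝ (fun z => h z j))
    (L : (Fin m → ℝ) → (Fin p → ℝ) → (Fin q → ℝ) → ℝ)
    (hL : ∀ z u v, L z u v = f z + (∑ i, u i * g z i) + (∑ j, v j * h z j))
    (Y : Set (Fin m → ℝ))
    (hY : Y = {y | (∀ i, g y i ≤ 0) ∧ (∀ j, h y j = 0)})
    -- pseudoconvexity of `L(·,u,v)` on `Y ∪ Z(u,v)` for every `u ≥ 0`, `v`
    (hpc : ∀ (u : Fin p → ℝ) (v : Fin q → ℝ), (∀ i, 0 ≤ u i) →
      ∀ y₁ y₂,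
        y₁ ∈ Y ∪ {z | fderiv ℝ (fun z' => L z' u v) z = 0} →
        y₂ ∈ Y ∪ {z | fderiv ℝ (fun z' => L z' u v) z = 0} →
        0 ≤ fderiv ℝ (fun z' => L z' u v) y₂ (y₁ - y₂) →
        L y₂ u v ≤ L y₁ u v)
    (ybar : Fin m → ℝ) (ubar : Fin p → ℝ) (vbar : Fin q → ℝ)
    -- ȳ is optimal for the primal problem (P)
    (hfeas : ybar ∈ Y)
    (hopt : ∀ y ∈ Y, f ybar ≤ f y)
    -- KKT conditions at ȳ with multipliers (ū, v̄)
    (hstat : fderiv ℝ (fun z' => L z' ubar vbar) ybar = 0)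
    (hub : ∀ i, 0 ≤ ubar i)
    (hcomp : ∑ i, ubar i * g ybar i = 0) :
    -- (ȳ, ū, v̄) is Wolfe-dual feasible, the values coincide, and it is
    -- optimal for the Wolfe dual (WD)
    f ybar = L ybar ubar vbar ∧
    (∀ z u v, fderiv ℝ (fun z' => L z' u v) z = 0 → (∀ i, 0 ≤ u i) →
      L z u v ≤ L ybar ubar vbar) := by
  rw [hY] at hfeas
  obtain ⟨hgle, hheq⟩ := hfeas
  have hval : f ybar = L ybar ubar vbar := by
    rw [hL, hcomp]
    simp [hheq]
  refine ⟨hval, fun z u v hz hu => ?_⟩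
  have h1 : L z u v ≤ L ybar u v := by
    apply hpc u v hu ybar z
    · left; rw [hY]; exact ⟨hgle, hheq⟩
    · right; exact hz
    · rw [hz]; simp
  have h2 : L ybar u v ≤ f ybar := by
    rw [hL]
    have : ∑ i, u i * g ybar i ≤ 0 := by
      apply Finset.sum_nonpos
      intro i _
      exact mul_nonpos_of_nonneg_of_nonpos (hu i) (hgle i)
    simp [hheq]
    linarith
  linarith
end

section
/- Suppose that for each x ∈ X there exists (z_x, u_x, v_x) ∈ W(x) with L(x, z_x, u_x, v_x) = min_{y ∈ Y(x)} f(x,y) = max_{(z,u,v) ∈ W(x)} L(x,z,u,v) (strong Wolfe duality for each lower-level problem). Then (x̄, ȳ) is a global optimal solution of the bilevel program (BP) if and only if there exists (z̄, ū, v̄) ∈ W(x̄) such that (x̄, ȳ, z̄, ū, v̄) is a global optimal solution of (WDP). -/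
open scoped BigOperators

/-- Under strong Wolfe duality for each lower-level problem, `(x̄,ȳ)` is a
global optimal solution of the bilevel program (BP) if and only if there is
`(z̄,ū,v̄) ∈ W(x̄)` such that `(x̄,ȳ,z̄,ū,v̄)` is a global optimal solution of
the single-level reformulation (WDP). -/
theorem bilevel_iff_wdp_global
    {n m p q : ℕ}
    (F : (Fin n → ℝ) → (Fin m → ℝ) → ℝ)
    (f : (Fin n → ℝ) → (Fin m → ℝ) → ℝ)
    (g : (Fin n → ℝ) → (Fin m → ℝ) → Fin p → ℝ)
    (h : (Fin n → ℝ) → (Fin m → ℝ) → Fin q → ℝ)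
    (X : Set (Fin n → ℝ))
    (L : (Fin n → ℝ) → (Fin m → ℝ) → (Fin p → ℝ) → (Fin q → ℝ) → ℝ)
    (hL : ∀ x z u v, L x z u v = f x z + (∑ i, u i * g x z i) + (∑ j, v j * h x z j))
    -- lower-level feasible set Y(x)
    (Y : (Fin n → ℝ) → Set (Fin m → ℝ))
    (hYdef : ∀ x, Y x = {y | (∀ i, g x y i ≤ 0) ∧ (∀ j, h x y j = 0)})
    -- lower-level solution set S(x)
    (S : (Fin n → ℝ) → Set (Fin m → ℝ))
    (hSdef : ∀ x, S x = {y | y ∈ Y x ∧ ∀ y' ∈ Y x, f x y ≤ f x y'})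
    -- Wolfe-dual feasible set W(x)
    (W : (Fin n → ℝ) → Set ((Fin m → ℝ) × (Fin p → ℝ) × (Fin q → ℝ)))
    (hWdef : ∀ x, W x = {zuv | fderiv ℝ (fun z' => L x z' zuv.2.1 zuv.2.2) zuv.1 = 0 ∧
      ∀ i, 0 ≤ zuv.2.1 i})
    -- strong Wolfe duality holds for every lower-level problem:
    -- there is (z_x,u_x,v_x) ∈ W(x) with
    -- L(x,z_x,u_x,v_x) = min_{y ∈ Y(x)} f(x,y) = max_{(z,u,v) ∈ W(x)} L(x,z,u,v)
    (hstrong : ∀ x ∈ X, ∃ zx ux vx, (zx, ux, vx) ∈ W x ∧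
      (∀ y ∈ Y x, L x zx ux vx ≤ f x y) ∧
      (∃ y ∈ Y x, f x y = L x zx ux vx) ∧
      (∀ zuv ∈ W x, L x zuv.1 zuv.2.1 zuv.2.2 ≤ L x zx ux vx))
    (xbar : Fin n → ℝ) (ybar : Fin m → ℝ) :
    -- (x̄,ȳ) globally optimal for (BP) ↔ ∃ (z̄,ū,v̄) ∈ W(x̄) with
    -- (x̄,ȳ,z̄,ū,v̄) globally optimal for (WDP)
    ((xbar ∈ X ∧ ybar ∈ S xbar) ∧
      ∀ x ∈ X, ∀ y ∈ S x, F xbar ybar ≤ F x y) ↔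
    (∃ zbar ubar vbar, (zbar, ubar, vbar) ∈ W xbar ∧
      (xbar ∈ X ∧ ybar ∈ Y xbar ∧ f xbar ybar ≤ L xbar zbar ubar vbar) ∧
      ∀ x y z u v, x ∈ X → y ∈ Y x → f x y ≤ L x z u v → (z, u, v) ∈ W x →
        F xbar ybar ≤ F x y) := by
  constructor
  · rintro ⟨⟨hxX, hyS⟩, hopt⟩
    obtain ⟨zb, ub, vb, hWb, hmin, ⟨y0, hy0Y, hy0⟩, hmax⟩ := hstrong xbar hxX
    rw [hSdef] at hyS
    obtain ⟨hyY, hyopt⟩ := hyS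
    refine ⟨zb, ub, vb, hWb, ⟨hxX, hyY, ?_⟩, ?_⟩
    · calc f xbar ybar ≤ f xbar y0 := hyopt y0 hy0Y
        _ = L xbar zb ub vb := hy0
    · intro x y z u v hxX' hyY' hfL hW'
      obtain ⟨zx, ux, vx, hWx, hminx, _, hmaxx⟩ := hstrong x hxX'
      refine hopt x hxX' y ?_
      rw [hSdef]
      refine ⟨hyY', fun y' hy' => ?_⟩
      calc f x y ≤ L x z u v := hfL
        _ ≤ L x zx ux vx := hmaxx (z, u, v) hW'
        _ ≤ f x y' := hminx y' hy'
  · rintro ⟨zb, ub, vb, hWb, ⟨hxX, hyY, hfL⟩, hopt⟩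
    obtain ⟨zx, ux, vx, hWx, hminx, _, hmaxx⟩ := hstrong xbar hxX
    constructor
    · refine ⟨hxX, ?_⟩
      rw [hSdef]
      refine ⟨hyY, fun y' hy' => ?_⟩
      calc f xbar ybar ≤ L xbar zb ub vb := hfL
        _ ≤ L xbar zx ux vx := hmaxx (zb, ub, vb) hWb
        _ ≤ f xbar y' := hminx y' hy'
    · intro x hxX' y hyS
      rw [hSdef] at hyS
      obtain ⟨hyY', hyopt⟩ := hyS
      obtain ⟨zx', ux', vx', hWx', hminx', ⟨y0, hy0Y, hy0⟩, _⟩ := hstrong x hxX'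
      exact hopt x y zx' ux' vx' hxX' hyY' (by
        calc f x y ≤ f x y0 := hyopt y0 hy0Y
          _ = L x zx' ux' vx' := hy0) hWx'
end

section
/- If (x̄, ȳ, ȳ, ū) (with z = y) is a feasible point of the simplified WDP reformulation, then the Mangasarian–Fromovitz constraint qualification fails at this point; specifically, (α, β, η^g, η^u) = (1, 0, ū, −g(x̄,ȳ)) is a nonzero abnormal multiplier for the constraint system of WDP at (x̄, ȳ, ȳ, ū). -/
/-!
With `z = ȳ` the WDP constraint `f(x,y) − L(x,z,u) ≤ 0` is active, and at any feasible point
its gradient is a combination of the gradients of the other constraints: by stationarity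
`∇_y f = −∇_y g · ū`, while `∇ₓ(f − L) = −∇ₓg · ū` and `∇_z L = 0`. Feasibility also forces
`ūᵀg(x̄,ȳ) = 0`, which makes `(1, 0, ū, −g(x̄,ȳ))` complementary, so it is an abnormal multiplier.
-/

section Calculus

variable {𝕜 : Type*} [NontriviallyNormedField 𝕜] {E F G : Type*} [NormedAddCommGroup E]
  [NormedSpace 𝕜 E] [NormedAddCommGroup F] [NormedSpace 𝕜 F] [NormedAddCommGroup G]
  [NormedSpace 𝕜 G]

theorem fderiv_add_sum_mul {ι : Type*} [Fintype ι] {φ : E → 𝕜} {ψ : ι → E → 𝕜} {x : E}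
    (c : ι → 𝕜) (hφ : DifferentiableAt 𝕜 φ x) (hψ : ∀ i, DifferentiableAt 𝕜 (ψ i) x) :
    fderiv 𝕜 (fun x' => φ x' + ∑ i, c i * ψ i x') x
      = fderiv 𝕜 φ x + ∑ i, c i • fderiv 𝕜 (ψ i) x := by
  have hsum : ∀ i ∈ Finset.univ, DifferentiableAt 𝕜 (fun x' => c i * ψ i x') x :=
    fun i _ => (hψ i).const_mul (c i)
  rw [fderiv_fun_add hφ (DifferentiableAt.fun_sum hsum), fderiv_fun_sum hsum]
  simp only [fderiv_const_mul (hψ _)]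

theorem DifferentiableAt.comp_prodMk_left {h : E × F → G} {x : E} {y : F}
    (hh : DifferentiableAt 𝕜 h (x, y)) : DifferentiableAt 𝕜 (fun x' => h (x', y)) x :=
  hh.comp x (differentiableAt_id.prodMk (differentiableAt_const y))

theorem DifferentiableAt.comp_prodMk_right {h : E × F → G} {x : E} {y : F}
    (hh : DifferentiableAt 𝕜 h (x, y)) : DifferentiableAt 𝕜 (fun y' => h (x, y')) y :=
  hh.comp y ((differentiableAt_const x).prodMk differentiableAt_id)

end Calculus

theorem Finset.sum_mul_eq_zero_of_nonneg_of_nonpos {R ι : Type*} [Semiring R] [PartialOrder R]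
    [IsOrderedRing R] {s : Finset ι} {u v : ι → R}
    (hu : ∀ i ∈ s, 0 ≤ u i) (hv : ∀ i ∈ s, v i ≤ 0) (hsum : 0 ≤ ∑ i ∈ s, u i * v i) :
    ∑ i ∈ s, u i * v i = 0 :=
  le_antisymm (Finset.sum_nonpos fun i hi => mul_nonpos_of_nonneg_of_nonpos (hu i hi) (hv i hi))
    hsum

/-- If `(x̄,ȳ,ȳ,ū)` (with `z = y`) is feasible for the simplified WDP
reformulation, then MFCQ fails there: the tuple
`(α,β,η^g,η^u) = (1, 0, ū, −g(x̄,ȳ))` is a nonzero abnormal multiplier for the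
constraint system of WDP at `(x̄,ȳ,ȳ,ū)`. -/
theorem wdp_mfcq_fails_when_z_eq_y
    {n m p : ℕ}
    (f : (Fin n → ℝ) → (Fin m → ℝ) → ℝ)
    (g : (Fin n → ℝ) → (Fin m → ℝ) → Fin p → ℝ)
    (hf : ContDiff ℝ 2 (fun xy : (Fin n → ℝ) × (Fin m → ℝ) => f xy.1 xy.2))
    (hg : ∀ i, ContDiff ℝ 2 (fun xy : (Fin n → ℝ) × (Fin m → ℝ) => g xy.1 xy.2 i))
    (L : (Fin n → ℝ) → (Fin m → ℝ) → (Fin p → ℝ) → ℝ)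
    (hL : ∀ x z u, L x z u = f x z + ∑ i, u i * g x z i)
    (xbar : Fin n → ℝ) (ybar : Fin m → ℝ) (ubar : Fin p → ℝ)
    -- feasibility of (x̄, ȳ, ȳ, ū) for the simplified WDP
    (hgle : ∀ i, g xbar ybar i ≤ 0)
    (hub : ∀ i, 0 ≤ ubar i)
    (hstat : fderiv ℝ (fun z' => L xbar z' ubar) ybar = 0)
    (hineq : f xbar ybar ≤ L xbar ybar ubar) :
    -- the abnormal multiplier (α, β, η^g, η^u) = (1, 0, ū, −g(x̄,ȳ)) belongs
    -- to the set ℳ of abnormal multipliers and is nonzero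
    (let α : ℝ := 1
     let β : Fin m → ℝ := 0
     let ηg : Fin p → ℝ := ubar
     let ηu : Fin p → ℝ := fun i => -(g xbar ybar i)
     -- 0 = α(∇ₓf(x̄,ȳ) − ∇ₓL(x̄,z̄,ū)) + ∇²_{zx}L(x̄,z̄,ū)β + ∇ₓg(x̄,ȳ)η^g
     (α • (fderiv ℝ (fun x' => f x' ybar) xbar -
            fderiv ℝ (fun x' => L x' ybar ubar) xbar) +
        fderiv ℝ (fun x' => fderiv ℝ (fun z' => L x' z' ubar) ybar β) xbar +
        ∑ i, ηg i • fderiv ℝ (fun x' => g x' ybar i) xbar = 0) ∧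
     -- 0 = α∇_y f(x̄,ȳ) + ∇_y g(x̄,ȳ)η^g
     (α • fderiv ℝ (fun y' => f xbar y') ybar +
        ∑ i, ηg i • fderiv ℝ (fun y' => g xbar y' i) ybar = 0) ∧
     -- 0 = −α∇_z L(x̄,z̄,ū) + ∇²_{zz}L(x̄,z̄,ū)β
     (-α • fderiv ℝ (fun z' => L xbar z' ubar) ybar +
        fderiv ℝ (fun z' => fderiv ℝ (fun z'' => L xbar z'' ubar) z' β) ybar = 0) ∧
     -- 0 = −α g(x̄,z̄) + ∇_z g(x̄,z̄)ᵀβ − η^u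
     (∀ i, -α * g xbar ybar i + fderiv ℝ (fun z' => g xbar z' i) ybar β - ηu i = 0) ∧
     -- α ≥ 0, α(f(x̄,ȳ) − L(x̄,z̄,ū)) = 0
     (0 ≤ α) ∧ (α * (f xbar ybar - L xbar ybar ubar) = 0) ∧
     -- η^u ≥ 0, ūᵀη^u = 0, η^g ≥ 0, g(x̄,ȳ)ᵀη^g = 0
     (∀ i, 0 ≤ ηu i) ∧ (∑ i, ubar i * ηu i = 0) ∧
     (∀ i, 0 ≤ ηg i) ∧ (∑ i, g xbar ybar i * ηg i = 0) ∧
     -- the abnormal multiplier is nonzero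
     ¬(α = 0 ∧ β = 0 ∧ ηg = 0 ∧ ηu = 0)) := by
  have hf' := hf.differentiable two_ne_zero (xbar, ybar)
  have hg' := fun i => (hg i).differentiable two_ne_zero (xbar, ybar)
  have hLx : fderiv ℝ (fun x' => L x' ybar ubar) xbar = fderiv ℝ (fun x' => f x' ybar) xbar
      + ∑ i, ubar i • fderiv ℝ (fun x' => g x' ybar i) xbar := by
    simp only [hL]
    exact fderiv_add_sum_mul ubar hf'.comp_prodMk_left fun i => (hg' i).comp_prodMk_left
  have hLy : fderiv ℝ (fun y' => L xbar y' ubar) ybar = fderiv ℝ (fun y' => f xbar y') ybar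
      + ∑ i, ubar i • fderiv ℝ (fun y' => g xbar y' i) ybar := by
    simp only [hL]
    exact fderiv_add_sum_mul ubar hf'.comp_prodMk_right fun i => (hg' i).comp_prodMk_right
  have hcompl : ∑ i, ubar i * g xbar ybar i = 0 :=
    Finset.sum_mul_eq_zero_of_nonneg_of_nonpos (fun i _ => hub i) (fun i _ => hgle i)
      (by linarith [hL xbar ybar ubar])
  refine ⟨?_, ?_, ?_, fun i => ?_, zero_le_one, ?_, fun i => neg_nonneg.2 (hgle i), ?_, hub, ?_,
    fun h => one_ne_zero h.1⟩
  · simp only [hLx, map_zero, fderiv_const_apply, one_smul]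
    abel
  · simpa [← hLy] using hstat
  · simp [hstat]
  · simp
  · rw [hL, one_mul]
    linarith
  · simp [hcompl]
  · simpa only [mul_comm] using hcompl
end

section
/- A point (x, y, u) is feasible to the simplified MPEC reformulation (∇_y f(x,y) + ∇_y g(x,y)u = 0, u ≥ 0, g(x,y) ≤ 0, uᵀ g(x,y) = 0) if and only if (x, y, y, u) is feasible to the simplified WDP reformulation (f(x,y) − f(x,z) − uᵀg(x,z) ≤ 0 with z = y, ∇_z(f(x,z) + uᵀg(x,z))|_{z=y} = 0, u ≥ 0, g(x,y) ≤ 0). -/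
open scoped BigOperators

/-- `(x,y,u)` is feasible for the simplified MPEC if and only if `(x,y,y,u)`
is feasible for the simplified WDP. -/
theorem mpec_feasible_iff_wdp_feasible
    {n m p : ℕ}
    (f : (Fin n → ℝ) → (Fin m → ℝ) → ℝ)
    (g : (Fin n → ℝ) → (Fin m → ℝ) → Fin p → ℝ)
    (hf : ContDiff ℝ 1 (fun xy : (Fin n → ℝ) × (Fin m → ℝ) => f xy.1 xy.2))
    (hg : ∀ i, ContDiff ℝ 1 (fun xy : (Fin n → ℝ) × (Fin m → ℝ) => g xy.1 xy.2 i))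
    (L : (Fin n → ℝ) → (Fin m → ℝ) → (Fin p → ℝ) → ℝ)
    (hL : ∀ x z u, L x z u = f x z + ∑ i, u i * g x z i)
    (x : Fin n → ℝ) (y : Fin m → ℝ) (u : Fin p → ℝ) :
    -- MPEC feasibility of (x, y, u)
    (fderiv ℝ (fun y' => L x y' u) y = 0 ∧
     (∀ i, 0 ≤ u i) ∧ (∀ i, g x y i ≤ 0) ∧ (∑ i, u i * g x y i = 0)) ↔
    -- WDP feasibility of (x, y, y, u)
    (f x y - L x y u ≤ 0 ∧
     fderiv ℝ (fun z' => L x z' u) y = 0 ∧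
     (∀ i, 0 ≤ u i) ∧ (∀ i, g x y i ≤ 0)) := by
  constructor
  · rintro ⟨hd, hu, hg0, hc⟩
    exact ⟨by rw [hL, hc]; simp, hd, hu, hg0⟩
  · rintro ⟨hle, hd, hu, hg0⟩
    refine ⟨hd, hu, hg0, le_antisymm ?_ ?_⟩
    · exact Finset.sum_nonpos fun i _ => mul_nonpos_of_nonneg_of_nonpos (hu i) (hg0 i)
    · rw [hL] at hle; linarith
end

section
/- If (x̄, ȳ, ȳ, ū) is a KKT point of the simplified WDP reformulation, then (x̄, ȳ, ū) is a strongly stationary (S-stationary) point of the simplified MPEC reformulation. Concretely, if there exist multipliers (η^g, η^u, α, β) satisfying the WDP KKT system (equations involving ∇F, ∇²L, sign and complementarity conditions), then setting λ^g := η^g − αū, λ^u := η^u + α g(x̄,ȳ), γ := β yields multipliers verifying the S-stationarity conditions: λ^g_i = 0 for i with g_i(x̄,ȳ) < 0 and ū_i = 0; λ^u_i = 0 for i with g_i(x̄,ȳ) = 0 and ū_i > 0; λ^g_i ≥ 0, λ^u_i ≥ 0 for i with g_i(x̄,ȳ) = ū_i = 0. -/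
/-! The WDP multiplier `β` plays the role of the MPEC multiplier `γ`. With `λ^g = η^g − αū`,
the `y`-stationarity of the MPEC is the sum of (WDPKKT-2) and (WDPKKT-3), once `∇_y L` is
expanded as `∇_y f + Σ ūᵢ ∇_y gᵢ`; (WDPKKT-4) is (MPCC-3) with `λ^u = η^u + α g`. The sign
conditions come from the complementarity in (WDPKKT-9) and (WDPKKT-10): on the indices where
`ūᵢ = 0` or `gᵢ(x̄,ȳ) = 0` the correction terms `α ūᵢ` and `α gᵢ(x̄,ȳ)` vanish. -/

theorem DifferentiableAt.of_uncurry_right {𝕜 E F G : Type*} [NontriviallyNormedField 𝕜]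
    [NormedAddCommGroup E] [NormedSpace 𝕜 E] [NormedAddCommGroup F] [NormedSpace 𝕜 F]
    [NormedAddCommGroup G] [NormedSpace 𝕜 G] {h : E → F → G} {x : E} {y : F}
    (hh : DifferentiableAt 𝕜 (fun p : E × F => h p.1 p.2) (x, y)) :
    DifferentiableAt 𝕜 (h x) y :=
  hh.comp y ((differentiableAt_const x).prodMk differentiableAt_id)

theorem fderiv_add_sum_mul_s8 {𝕜 E ι : Type*} [NontriviallyNormedField 𝕜]
    [NormedAddCommGroup E] [NormedSpace 𝕜 E] [Fintype ι] {f : E → 𝕜} {g : ι → E → 𝕜} {y : E}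
    (u : ι → 𝕜) (hf : DifferentiableAt 𝕜 f y) (hg : ∀ i, DifferentiableAt 𝕜 (g i) y) :
    fderiv 𝕜 (fun y => f y + ∑ i, u i * g i y) y = fderiv 𝕜 f y + ∑ i, u i • fderiv 𝕜 (g i) y := by
  have hug : ∀ i ∈ Finset.univ, DifferentiableAt 𝕜 (fun y => u i * g i y) y :=
    fun i _ => (hg i).const_mul (u i)
  rw [fderiv_fun_add hf (DifferentiableAt.fun_sum hug), fderiv_fun_sum hug]
  simp only [fun i => fderiv_const_mul (hg i) (u i)]

theorem add_add_sum_sub_mul_smul_eq_zero {R M ι : Type*} [CommRing R] [AddCommGroup M]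
    [Module R M] [Fintype ι] {a b h : M} {c : ι → M} {α : R} {η u : ι → R}
    (h₁ : a + α • b + ∑ i, η i • c i = 0) (h₂ : -α • (b + ∑ i, u i • c i) + h = 0) :
    a + h + ∑ i, (η i - α * u i) • c i = 0 := by
  simp only [sub_smul, mul_smul, Finset.sum_sub_distrib, ← Finset.smul_sum]
  linear_combination (norm := module) h₁ + h₂

theorem sstationary_signs_of_complementarity {ηg ηu u c α : ℝ} (hηg : 0 ≤ ηg) (hηgc : ηg * c = 0)
    (hηu : 0 ≤ ηu) (hηuu : ηu * u = 0) :
    (c < 0 → u = 0 → ηg - α * u = 0) ∧ (c = 0 → 0 < u → ηu + α * c = 0) ∧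
      (c = 0 → u = 0 → 0 ≤ ηg - α * u ∧ 0 ≤ ηu + α * c) := by
  refine ⟨fun hc hu => ?_, fun hc hu => ?_, fun hc hu => ?_⟩
  · simp [hu, (mul_eq_zero.mp hηgc).resolve_right hc.ne]
  · simp [hc, (mul_eq_zero.mp hηuu).resolve_right hu.ne']
  · simp [hc, hu, hηg, hηu]

theorem wdp_kkt_implies_mpec_sstationary_general
    {n m p : ℕ}
    (F : (Fin n → ℝ) → (Fin m → ℝ) → ℝ)
    (f : (Fin n → ℝ) → (Fin m → ℝ) → ℝ)
    (g : (Fin n → ℝ) → (Fin m → ℝ) → Fin p → ℝ)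
    (hf : ContDiff ℝ 2 (fun xy : (Fin n → ℝ) × (Fin m → ℝ) => f xy.1 xy.2))
    (hg : ∀ i, ContDiff ℝ 2 (fun xy : (Fin n → ℝ) × (Fin m → ℝ) => g xy.1 xy.2 i))
    (L : (Fin n → ℝ) → (Fin m → ℝ) → (Fin p → ℝ) → ℝ)
    (hL : ∀ x z u, L x z u = f x z + ∑ i, u i * g x z i)
    (xbar : Fin n → ℝ) (ybar : Fin m → ℝ) (ubar : Fin p → ℝ)
    (ηg ηu : Fin p → ℝ) (α : ℝ) (β : Fin m → ℝ)
    -- (WDPKKT-1)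
    (w1 : fderiv ℝ (fun x' => F x' ybar) xbar +
        fderiv ℝ (fun x' => fderiv ℝ (fun y' => L x' y' ubar) ybar β) xbar +
        (∑ i, (ηg i - α * ubar i) • fderiv ℝ (fun x' => g x' ybar i) xbar) = 0)
    -- (WDPKKT-2)
    (w2 : fderiv ℝ (fun y' => F xbar y') ybar +
        α • fderiv ℝ (fun y' => f xbar y') ybar +
        (∑ i, ηg i • fderiv ℝ (fun y' => g xbar y' i) ybar) = 0)
    -- (WDPKKT-3)
    (w3 : -α • fderiv ℝ (fun y' => L xbar y' ubar) ybar +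
        fderiv ℝ (fun y' => fderiv ℝ (fun y'' => L xbar y'' ubar) y' β) ybar = 0)
    -- (WDPKKT-4)
    (w4 : ∀ i, -α * g xbar ybar i +
        fderiv ℝ (fun y' => g xbar y' i) ybar β - ηu i = 0)
    -- (WDPKKT-6)
    (w6 : fderiv ℝ (fun y' => L xbar y' ubar) ybar = 0)
    -- (WDPKKT-9): 0 ≤ η^g ⟂ g(x̄,ȳ) ≤ 0
    (w9 : ∀ i, 0 ≤ ηg i ∧ g xbar ybar i ≤ 0 ∧ ηg i * g xbar ybar i = 0)
    -- (WDPKKT-10): 0 ≤ η^u ⟂ ū ≥ 0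
    (w10 : ∀ i, 0 ≤ ηu i ∧ 0 ≤ ubar i ∧ ηu i * ubar i = 0) :
    -- S-stationarity of (x̄,ȳ,ū) for the simplified MPEC with multipliers
    -- λ^g := η^g − αū, λ^u := η^u + α g(x̄,ȳ), γ := β
    ∃ (lamg lamu : Fin p → ℝ) (γ : Fin m → ℝ),
      lamg = (fun i => ηg i - α * ubar i) ∧
      lamu = (fun i => ηu i + α * g xbar ybar i) ∧
      γ = β ∧
      -- (MPCC-1)
      (fderiv ℝ (fun x' => F x' ybar) xbar +
        fderiv ℝ (fun x' => fderiv ℝ (fun y' => L x' y' ubar) ybar γ) xbar +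
        (∑ i, lamg i • fderiv ℝ (fun x' => g x' ybar i) xbar) = 0) ∧
      -- (MPCC-2)
      (fderiv ℝ (fun y' => F xbar y') ybar +
        fderiv ℝ (fun y' => fderiv ℝ (fun y'' => L xbar y'' ubar) y' γ) ybar +
        (∑ i, lamg i • fderiv ℝ (fun y' => g xbar y' i) ybar) = 0) ∧
      -- (MPCC-3)
      (∀ i, fderiv ℝ (fun y' => g xbar y' i) ybar γ - lamu i = 0) ∧
      -- (MPCC-4)
      (fderiv ℝ (fun y' => L xbar y' ubar) ybar = 0 ∧
        (∀ i, g xbar ybar i ≤ 0) ∧ (∀ i, 0 ≤ ubar i)) ∧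
      -- (MPCC-6)
      (∀ i, g xbar ybar i < 0 → ubar i = 0 → lamg i = 0) ∧
      -- (MPCC-7)
      (∀ i, g xbar ybar i = 0 → 0 < ubar i → lamu i = 0) ∧
      -- (MPCC-8)
      (∀ i, g xbar ybar i = 0 → ubar i = 0 → 0 ≤ lamg i ∧ 0 ≤ lamu i) := by
  have hfy : DifferentiableAt ℝ (fun y' => f xbar y') ybar :=
    (hf.differentiable two_ne_zero (xbar, ybar)).of_uncurry_right
  have hgy : ∀ i, DifferentiableAt ℝ (fun y' => g xbar y' i) ybar := fun i =>
    ((hg i).differentiable two_ne_zero (xbar, ybar)).of_uncurry_right (h := fun x y => g x y i)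
  have hLy : fderiv ℝ (fun y' => L xbar y' ubar) ybar = fderiv ℝ (fun y' => f xbar y') ybar +
      ∑ i, ubar i • fderiv ℝ (fun y' => g xbar y' i) ybar := by
    simp only [hL]
    exact fderiv_add_sum_mul_s8 (g := fun i y' => g xbar y' i) ubar hfy hgy
  have signs i := sstationary_signs_of_complementarity (α := α) (w9 i).1 (w9 i).2.2 (w10 i).1
    (w10 i).2.2
  refine ⟨_, _, _, rfl, rfl, rfl, w1, ?_, fun i => by linarith [w4 i],
    ⟨w6, fun i => (w9 i).2.1, fun i => (w10 i).2.1⟩, fun i => (signs i).1,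
    fun i => (signs i).2.1, fun i => (signs i).2.2⟩
  rw [hLy] at w3
  exact add_add_sum_sub_mul_smul_eq_zero w2 w3

/-- If `(x̄,ȳ,ȳ,ū)` is a KKT point of the simplified WDP reformulation with
multipliers `(η^g, η^u, α, β)`, then setting `λ^g := η^g − αū`,
`λ^u := η^u + α g(x̄,ȳ)`, `γ := β` yields multipliers showing that
`(x̄,ȳ,ū)` is an S-stationary point of the simplified MPEC. -/
theorem wdp_kkt_implies_mpec_sstationary
    {n m p : ℕ}
    (F : (Fin n → ℝ) → (Fin m → ℝ) → ℝ)
    (f : (Fin n → ℝ) → (Fin m → ℝ) → ℝ)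
    (g : (Fin n → ℝ) → (Fin m → ℝ) → Fin p → ℝ)
    (hF : ContDiff ℝ 2 (fun xy : (Fin n → ℝ) × (Fin m → ℝ) => F xy.1 xy.2))
    (hf : ContDiff ℝ 2 (fun xy : (Fin n → ℝ) × (Fin m → ℝ) => f xy.1 xy.2))
    (hg : ∀ i, ContDiff ℝ 2 (fun xy : (Fin n → ℝ) × (Fin m → ℝ) => g xy.1 xy.2 i))
    (L : (Fin n → ℝ) → (Fin m → ℝ) → (Fin p → ℝ) → ℝ)
    (hL : ∀ x z u, L x z u = f x z + ∑ i, u i * g x z i)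
    (xbar : Fin n → ℝ) (ybar : Fin m → ℝ) (ubar : Fin p → ℝ)
    (ηg ηu : Fin p → ℝ) (α : ℝ) (β : Fin m → ℝ)
    -- (WDPKKT-1)
    (w1 : fderiv ℝ (fun x' => F x' ybar) xbar +
        fderiv ℝ (fun x' => fderiv ℝ (fun y' => L x' y' ubar) ybar β) xbar +
        (∑ i, (ηg i - α * ubar i) • fderiv ℝ (fun x' => g x' ybar i) xbar) = 0)
    -- (WDPKKT-2)
    (w2 : fderiv ℝ (fun y' => F xbar y') ybar +
        α • fderiv ℝ (fun y' => f xbar y') ybar +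
        (∑ i, ηg i • fderiv ℝ (fun y' => g xbar y' i) ybar) = 0)
    -- (WDPKKT-3)
    (w3 : -α • fderiv ℝ (fun y' => L xbar y' ubar) ybar +
        fderiv ℝ (fun y' => fderiv ℝ (fun y'' => L xbar y'' ubar) y' β) ybar = 0)
    -- (WDPKKT-4)
    (w4 : ∀ i, -α * g xbar ybar i +
        fderiv ℝ (fun y' => g xbar y' i) ybar β - ηu i = 0)
    -- (WDPKKT-6)
    (w6 : fderiv ℝ (fun y' => L xbar y' ubar) ybar = 0)
    -- (WDPKKT-8): 0 ≤ α ⟂ ūᵀg(x̄,ȳ) ≥ 0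
    (w8 : 0 ≤ α ∧ 0 ≤ (∑ i, ubar i * g xbar ybar i) ∧
        α * (∑ i, ubar i * g xbar ybar i) = 0)
    -- (WDPKKT-9): 0 ≤ η^g ⟂ g(x̄,ȳ) ≤ 0
    (w9 : ∀ i, 0 ≤ ηg i ∧ g xbar ybar i ≤ 0 ∧ ηg i * g xbar ybar i = 0)
    -- (WDPKKT-10): 0 ≤ η^u ⟂ ū ≥ 0
    (w10 : ∀ i, 0 ≤ ηu i ∧ 0 ≤ ubar i ∧ ηu i * ubar i = 0) :
    -- S-stationarity of (x̄,ȳ,ū) for the simplified MPEC with multipliers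
    -- λ^g := η^g − αū, λ^u := η^u + α g(x̄,ȳ), γ := β
    ∃ (lamg lamu : Fin p → ℝ) (γ : Fin m → ℝ),
      lamg = (fun i => ηg i - α * ubar i) ∧
      lamu = (fun i => ηu i + α * g xbar ybar i) ∧
      γ = β ∧
      -- (MPCC-1)
      (fderiv ℝ (fun x' => F x' ybar) xbar +
        fderiv ℝ (fun x' => fderiv ℝ (fun y' => L x' y' ubar) ybar γ) xbar +
        (∑ i, lamg i • fderiv ℝ (fun x' => g x' ybar i) xbar) = 0) ∧
      -- (MPCC-2)
      (fderiv ℝ (fun y' => F xbar y') ybar +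
        fderiv ℝ (fun y' => fderiv ℝ (fun y'' => L xbar y'' ubar) y' γ) ybar +
        (∑ i, lamg i • fderiv ℝ (fun y' => g xbar y' i) ybar) = 0) ∧
      -- (MPCC-3)
      (∀ i, fderiv ℝ (fun y' => g xbar y' i) ybar γ - lamu i = 0) ∧
      -- (MPCC-4)
      (fderiv ℝ (fun y' => L xbar y' ubar) ybar = 0 ∧
        (∀ i, g xbar ybar i ≤ 0) ∧ (∀ i, 0 ≤ ubar i)) ∧
      -- (MPCC-6)
      (∀ i, g xbar ybar i < 0 → ubar i = 0 → lamg i = 0) ∧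
      -- (MPCC-7)
      (∀ i, g xbar ybar i = 0 → 0 < ubar i → lamu i = 0) ∧
      -- (MPCC-8)
      (∀ i, g xbar ybar i = 0 → ubar i = 0 → 0 ≤ lamg i ∧ 0 ≤ lamu i) :=
  wdp_kkt_implies_mpec_sstationary_general F f g hf hg L hL xbar ybar ubar ηg ηu α β w1 w2 w3 w4 w6
    w9 w10
end

section
/- The constraint system x ≥ 0, s ≥ 0, t ≥ 0, −e^{−s²} + 0.3s² ≤ −e^{−t²}(2t² + 1) − 0.3t² is satisfied only when s = 0 and t = 0. Consequently, the problem of minimizing x − s over this set has unique optimal solution (x, s, t) = (0, 0, 0) with optimal value 0. -/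
lemma exp_neg_one_gt : (0.36787:ℝ) < Real.exp (-1) := by
  rw [Real.exp_neg, lt_inv_comm₀ (by norm_num) (Real.exp_pos 1)]
  calc Real.exp 1 < 2.7182818286 := Real.exp_one_lt_d9
    _ < 0.36787⁻¹ := by norm_num

lemma exp_neg_two_gt : (0.1353:ℝ) < Real.exp (-2) := by
  have h := exp_neg_one_gt
  have h2 : Real.exp (-2) = Real.exp (-1) * Real.exp (-1) := by
    rw [← Real.exp_add]; norm_num
  have h3 := mul_lt_mul'' h h (by norm_num) (by norm_num)
  norm_num at h3; rw [h2]; linarith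

lemma exp_neg_three_gt : (0.0497:ℝ) < Real.exp (-3) := by
  have h1 := exp_neg_one_gt
  have h2 := exp_neg_two_gt
  have h3 : Real.exp (-3) = Real.exp (-2) * Real.exp (-1) := by
    rw [← Real.exp_add]; norm_num
  have h4 := mul_lt_mul'' h2 h1 (by norm_num) (by norm_num)
  norm_num at h4; rw [h3]; linarith

lemma exp_shift (k b : ℝ) : Real.exp (-k) * (k + 1 - b) ≤ Real.exp (-b) := by
  have h : Real.exp (-b) = Real.exp (-k) * Real.exp (k - b) := by
    rw [← Real.exp_add]; ring_nf
  rw [h]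
  have := Real.add_one_le_exp (k - b)
  have hk := (Real.exp_pos (-k)).le
  nlinarith

lemma key (b : ℝ) (hb : 0 < b) : 1 < Real.exp (-b) * (2*b+1) + 0.3*b := by
  rcases le_or_gt b 1 with h1 | h1
  · have hs : 1 - b/2 < Real.exp (-(b/2)) := by
      have := Real.add_one_lt_exp (show -(b/2) ≠ 0 by
        simpa using (show (0:ℝ) < b/2 by linarith).ne')
      linarith
    have hsq : (1 - b/2)^2 < Real.exp (-b) := by
      have h2 : Real.exp (-b) = Real.exp (-(b/2)) * Real.exp (-(b/2)) := by
        rw [← Real.exp_add]; ring_nf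
      have hpos : (0:ℝ) ≤ 1 - b/2 := by linarith
      nlinarith [Real.exp_pos (-(b/2))]
    nlinarith [mul_lt_mul_of_pos_right hsq (show (0:ℝ) < 2*b+1 by linarith),
      mul_nonneg (sq_nonneg (b-1)) hb.le, sq_nonneg (b-1)]
  rcases le_or_gt b 1.5 with h2 | h2
  · have hA : Real.exp (-1) * (1 + 1 - b) ≤ Real.exp (-b) := exp_shift 1 b
    nlinarith [mul_le_mul_of_nonneg_right hA (show (0:ℝ) ≤ 2*b+1 by linarith),
      mul_lt_mul_of_pos_right exp_neg_one_gt
        (show (0:ℝ) < (2-b)*(2*b+1) by nlinarith),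
      mul_nonneg (by linarith : (0:ℝ) ≤ b-1) (by linarith : (0:ℝ) ≤ 1.5-b)]
  rcases le_or_gt b 2.8 with h3 | h3
  · have hA : Real.exp (-2) * (2 + 1 - b) ≤ Real.exp (-b) := exp_shift 2 b
    nlinarith [mul_le_mul_of_nonneg_right hA (show (0:ℝ) ≤ 2*b+1 by linarith),
      mul_lt_mul_of_pos_right exp_neg_two_gt
        (show (0:ℝ) < (3-b)*(2*b+1) by nlinarith),
      mul_nonneg (by linarith : (0:ℝ) ≤ b-1.5) (by linarith : (0:ℝ) ≤ 2.8-b)]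
  rcases le_or_gt b (10/3) with h4 | h4
  · have hA : Real.exp (-3) * (3 + 1 - b) ≤ Real.exp (-b) := exp_shift 3 b
    nlinarith [mul_le_mul_of_nonneg_right hA (show (0:ℝ) ≤ 2*b+1 by linarith),
      mul_lt_mul_of_pos_right exp_neg_three_gt
        (show (0:ℝ) < (4-b)*(2*b+1) by nlinarith),
      mul_nonneg (by linarith : (0:ℝ) ≤ b-2.8) (by linarith : (0:ℝ) ≤ 10/3-b)]
  · nlinarith [mul_pos (Real.exp_pos (-b)) (show (0:ℝ) < 2*b+1 by linarith)]

/-- The constraint system `x ≥ 0, s ≥ 0, t ≥ 0,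
−e^{−s²} + 0.3s² ≤ −e^{−t²}(2t² + 1) − 0.3t²` forces `s = 0` and `t = 0`;
consequently, minimizing `x − s` over this set has the unique optimal solution
`(0,0,0)` with optimal value `0`. -/
theorem reduced_wdp_unique_solution :
    -- the last constraint forces s = 0 and t = 0
    (∀ x s t : ℝ, 0 ≤ x → 0 ≤ s → 0 ≤ t →
      -Real.exp (-s ^ 2) + 0.3 * s ^ 2 ≤
        -Real.exp (-t ^ 2) * (2 * t ^ 2 + 1) - 0.3 * t ^ 2 →
      s = 0 ∧ t = 0) ∧
    -- (0,0,0) is feasible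
    ((0:ℝ) ≤ 0 ∧ (0:ℝ) ≤ 0 ∧ (0:ℝ) ≤ 0 ∧
      -Real.exp (-(0:ℝ) ^ 2) + 0.3 * (0:ℝ) ^ 2 ≤
        -Real.exp (-(0:ℝ) ^ 2) * (2 * (0:ℝ) ^ 2 + 1) - 0.3 * (0:ℝ) ^ 2) ∧
    -- optimal value 0 attained uniquely at (0,0,0)
    (∀ x s t : ℝ, 0 ≤ x → 0 ≤ s → 0 ≤ t →
      -Real.exp (-s ^ 2) + 0.3 * s ^ 2 ≤
        -Real.exp (-t ^ 2) * (2 * t ^ 2 + 1) - 0.3 * t ^ 2 →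
      (0:ℝ) ≤ x - s ∧ (x - s = 0 → x = 0 ∧ s = 0 ∧ t = 0)) := by
  have forces : ∀ x s t : ℝ, 0 ≤ x → 0 ≤ s → 0 ≤ t →
      -Real.exp (-s ^ 2) + 0.3 * s ^ 2 ≤
        -Real.exp (-t ^ 2) * (2 * t ^ 2 + 1) - 0.3 * t ^ 2 →
      s = 0 ∧ t = 0 := by
    intro x s t hx hs ht hC
    have hsexp : Real.exp (-s ^ 2) ≤ 1 := by
      have h := Real.exp_le_exp.mpr (neg_nonpos.mpr (sq_nonneg s))
      simpa using h
    have ht2 : t ^ 2 = 0 := by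
      by_contra hne
      have hpos : 0 < t ^ 2 := lt_of_le_of_ne (sq_nonneg t) (Ne.symm hne)
      have hk := key (t ^ 2) hpos
      nlinarith [sq_nonneg s]
    have hs2 : s ^ 2 = 0 := by
      rw [ht2] at hC
      norm_num at hC
      nlinarith [sq_nonneg s]
    exact ⟨pow_eq_zero_iff (two_ne_zero) |>.mp hs2,
      pow_eq_zero_iff (two_ne_zero) |>.mp ht2⟩
  refine ⟨forces, ⟨le_refl _, le_refl _, le_refl _, by norm_num⟩, ?_⟩
  intro x s t hx hs ht hC
  obtain ⟨hs0, ht0⟩ := forces x s t hx hs ht hC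
  subst hs0; subst ht0
  refine ⟨by simpa using hx, fun h => ⟨by linarith, rfl, rfl⟩⟩
end

section
/- Consider the constrained optimization problem: minimize (x − y − 8)² subject to x ≥ 1, y³ − x ≤ 0, y ≥ 0, y − z − u₁(z³ − x) + u₂z ≤ 0, 1 + 3u₁z² − u₂ = 0, u₁ ≥ 0, u₂ ≥ 0, in variables (x, y, z, u₁, u₂). At the feasible point (8, 0, −3, 0, 1), the Mangasarian–Fromovitz constraint qualification holds: the gradient of the unique equality constraint, (0,0,0,27,−1), is nonzero, and the direction d = (0,1,0,1,27) satisfies dᵀ(0,0,0,27,−1) = 0 and has strictly negative inner product with the gradients (0,−1,0,0,0), (0,1,0,35,−3), (0,0,0,−1,0) of the three active inequality constraints. -/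
/-!
All constraints are polynomial, so their gradients follow from the sum, product and power rules.
At `w₀` the stationarity gradient is `(0, 0, 0, 27, −1)`, which forces `d u₂ = 27 d u₁`; with
`d y = d u₁ = 1` the weak-duality gradient `(0, 1, 0, 35, −3)` gives `1 + 35 − 81 < 0`, and the
other two active constraints `y ≥ 0`, `u₁ ≥ 0` are entered strictly along `d`.
-/

theorem fderiv_coord {𝕜 ι : Type*} [NontriviallyNormedField 𝕜] [Fintype ι] (i : ι) (w : ι → 𝕜) :
    fderiv 𝕜 (fun w : ι → 𝕜 => w i) w = ContinuousLinearMap.proj i :=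
  (hasFDerivAt_apply i w).fderiv

theorem fderiv_neg_coord {𝕜 ι : Type*} [NontriviallyNormedField 𝕜] [Fintype ι] (i : ι)
    (w dw : ι → 𝕜) : fderiv 𝕜 (fun w : ι → 𝕜 => -w i) w dw = -dw i := by
  simp [fderiv_coord]

/-- The lower-level stationarity condition `∂_z (z + u₁ (z³ − x) − u₂ z) = 0`,
in the coordinates `(x, y, z, u₁, u₂)`. -/
def wdpStationarity (w : Fin 5 → ℝ) : ℝ := 1 + 3 * w 3 * w 2 ^ 2 - w 4

/-- The weak-duality constraint `y ≤ z + u₁ (z³ − x) − u₂ z`, in the form `_ ≤ 0`. -/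
def wdpWeakDuality (w : Fin 5 → ℝ) : ℝ := w 1 - w 2 - w 3 * (w 2 ^ 3 - w 0) + w 4 * w 2

theorem fderiv_wdpStationarity (w dw : Fin 5 → ℝ) :
    fderiv ℝ wdpStationarity w dw = 3 * w 2 ^ 2 * dw 3 + 6 * w 3 * w 2 * dw 2 - dw 4 := by
  unfold wdpStationarity
  simp (disch := fun_prop) [fderiv_fun_sub, fderiv_fun_mul, fderiv_fun_pow, fderiv_coord]
  ring

theorem fderiv_wdpWeakDuality (w dw : Fin 5 → ℝ) :
    fderiv ℝ wdpWeakDuality w dw =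
      dw 1 - dw 2 - (w 2 ^ 3 - w 0) * dw 3 - w 3 * (3 * w 2 ^ 2 * dw 2 - dw 0) + w 2 * dw 4
        + w 4 * dw 2 := by
  unfold wdpWeakDuality
  simp (disch := fun_prop)
    [fderiv_fun_add, fderiv_fun_sub, fderiv_fun_mul, fderiv_fun_pow, fderiv_coord]
  ring

/-- For the WDP reformulation
`min (x−y−8)²` s.t. `x ≥ 1, y³ − x ≤ 0, y ≥ 0,
`y − z − u₁(z³−x) + u₂z ≤ 0`, `1 + 3u₁z² − u₂ = 0`, `u₁ ≥ 0`, `u₂ ≥ 0`,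
MFCQ holds at the feasible point `(8, 0, −3, 0, 1)`:
the equality-constraint gradient `(0,0,0,27,−1)` is nonzero (hence linearly
independent) and `d = (0,1,0,1,27)` is orthogonal to it and makes a strictly
negative inner product with the gradients of all active inequality
constraints. -/
theorem example_wdp_mfcq_holds
    -- variables ordered (x, y, z, u₁, u₂) as w 0, w 1, w 2, w 3, w 4
    (H G1 G2 G3 G4 G5 G6 : (Fin 5 → ℝ) → ℝ)
    (hH : ∀ w, H w = 1 + 3 * w 3 * (w 2) ^ 2 - w 4)          -- equality constraint
    (hG1 : ∀ w, G1 w = -(w 1))                                -- y ≥ 0 (active)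
    (hG2 : ∀ w, G2 w = w 1 - w 2 - w 3 * ((w 2) ^ 3 - w 0) + w 4 * w 2) -- (active)
    (hG3 : ∀ w, G3 w = -(w 3))                                -- u₁ ≥ 0 (active)
    (hG4 : ∀ w, G4 w = 1 - w 0)                               -- x ≥ 1
    (hG5 : ∀ w, G5 w = (w 1) ^ 3 - w 0)                       -- y³ − x ≤ 0
    (hG6 : ∀ w, G6 w = -(w 4))                                -- u₂ ≥ 0
    (w0 d : Fin 5 → ℝ)
    (hw0 : w0 = ![8, 0, -3, 0, 1])
    (hd : d = ![0, 1, 0, 1, 27]) :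
    -- w0 is feasible, with G1, G2, G3 the active inequality constraints
    (H w0 = 0 ∧ G1 w0 = 0 ∧ G2 w0 = 0 ∧ G3 w0 = 0 ∧
      G4 w0 < 0 ∧ G5 w0 < 0 ∧ G6 w0 < 0) ∧
    -- the gradients are as claimed
    (∀ dw, fderiv ℝ H w0 dw = 27 * dw 3 - dw 4) ∧
    (∀ dw, fderiv ℝ G1 w0 dw = -dw 1) ∧
    (∀ dw, fderiv ℝ G2 w0 dw = dw 1 + 35 * dw 3 - 3 * dw 4) ∧
    (∀ dw, fderiv ℝ G3 w0 dw = -dw 3) ∧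
    -- MFCQ: the equality gradient is nonzero (linearly independent), and
    -- d satisfies the Mangasarian–Fromovitz direction conditions
    fderiv ℝ H w0 ≠ 0 ∧
    fderiv ℝ H w0 d = 0 ∧
    fderiv ℝ G1 w0 d < 0 ∧
    fderiv ℝ G2 w0 d < 0 ∧
    fderiv ℝ G3 w0 d < 0 := by
  obtain rfl : H = wdpStationarity := funext hH
  obtain rfl : G2 = wdpWeakDuality := funext hG2
  obtain ⟨hx, hy, hz, hu₁, hu₂⟩ : w0 0 = 8 ∧ w0 1 = 0 ∧ w0 2 = -3 ∧ w0 3 = 0 ∧ w0 4 = 1 := by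
    subst hw0; exact ⟨rfl, rfl, rfl, rfl, rfl⟩
  obtain ⟨-, hdy, -, hdu₁, hdu₂⟩ : d 0 = 0 ∧ d 1 = 1 ∧ d 2 = 0 ∧ d 3 = 1 ∧ d 4 = 27 := by
    subst hd; exact ⟨rfl, rfl, rfl, rfl, rfl⟩
  have gradH (dw : Fin 5 → ℝ) : fderiv ℝ wdpStationarity w0 dw = 27 * dw 3 - dw 4 := by
    rw [fderiv_wdpStationarity, hz, hu₁]; ring
  have gradG1 : ∀ dw, fderiv ℝ G1 w0 dw = -dw 1 := by
    rw [funext hG1]; exact fderiv_neg_coord 1 w0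
  have gradG2 (dw : Fin 5 → ℝ) :
      fderiv ℝ wdpWeakDuality w0 dw = dw 1 + 35 * dw 3 - 3 * dw 4 := by
    rw [fderiv_wdpWeakDuality, hx, hz, hu₁, hu₂]; ring
  have gradG3 : ∀ dw, fderiv ℝ G3 w0 dw = -dw 3 := by
    rw [funext hG3]; exact fderiv_neg_coord 3 w0
  refine ⟨?feasible, gradH, gradG1, gradG2, gradG3, ?nonzero, ?_⟩
  case feasible =>
    simp only [wdpStationarity, wdpWeakDuality, hG1, hG3, hG4, hG5, hG6, hx, hy, hz, hu₁, hu₂]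
    norm_num
  case nonzero => exact fun h => by simpa [h] using gradH (Pi.single 3 1)
  rw [gradH, gradG1, gradG2, gradG3, hdy, hdu₁, hdu₂]
  norm_num
end

section
/- The point (x, y, z, u₁, u₂) = (0, 1, 1, 0, 0) is NOT a KKT point of the WDP reformulation: min x² − (2y+1)² s.t. x ≤ 0, 2(z−1) − u₁ + u₂ = 0, (y−1)² − (z−1)² − u₁(3x−z−3) − u₂(x+z−1) ≤ 0, u₁ ≥ 0, u₂ ≥ 0, 3x − y − 3 ≤ 0, x + y − 1 ≤ 0. That is, there exist no multipliers (ξ, η, ζ, μ^g, μ^u) satisfying the KKT system ξ + 3μ₁^g + μ₂^g = 0, −12 − μ₁^g + μ₂^g = 0, 2η = 0, −η + 4ζ − μ₁^u = 0, η − μ₂^u = 0, ξ ≥ 0, ζ ≥ 0, μ₁^g = 0, μ₂^g ≥ 0, μ^u ≥ 0. -/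
/-- The point `(x, y, z, u₁, u₂) = (0, 1, 1, 0, 0)` is NOT a KKT point of the
WDP reformulation `min x² − (2y+1)²` s.t. `x ≤ 0`, `2(z−1) − u₁ + u₂ = 0`,
`(y−1)² − (z−1)² − u₁(3x−z−3) − u₂(x+z−1) ≤ 0`, `u₁ ≥ 0`, `u₂ ≥ 0`,
`3x − y − 3 ≤ 0`, `x + y − 1 ≤ 0`: no multipliers satisfy the KKT system. -/
theorem example_wdp_not_kkt :
    ¬ ∃ ξ η ζ μg1 μg2 μu1 μu2 : ℝ,
      ξ + 3 * μg1 + μg2 = 0 ∧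
      -12 - μg1 + μg2 = 0 ∧
      2 * η = 0 ∧
      -η + 4 * ζ - μu1 = 0 ∧
      η - μu2 = 0 ∧
      0 ≤ ξ ∧ 0 ≤ ζ ∧ μg1 = 0 ∧ 0 ≤ μg2 ∧ 0 ≤ μu1 ∧ 0 ≤ μu2 := by
  rintro ⟨ξ,η,ζ,g1,g2,u1,u2,h1,h2,_,_,_,hξ,_,hg1,_,_,_⟩
  subst hg1; linarith
end

section
/- (Stability of positive-linear independence) Let G₁,…,G_l, H₁,…,H_r : ℝ^N → ℝ^N be continuous vector-valued maps. If the family of vectors {G₁(w̄),…,G_l(w̄)} ∪ {H₁(w̄),…,H_r(w̄)} is positive-linearly independent at w̄ (i.e., the only α ∈ ℝ^l with α ≥ 0 and β ∈ ℝ^r with Σ αᵢGᵢ(w̄) + Σ βⱼHⱼ(w̄) = 0 is (α,β) = 0), then there exists a neighborhood U of w̄ such that the family {G₁(w),…,G_l(w)} ∪ {H₁(w),…,H_r(w)} is positive-linearly independent for every w ∈ U. -/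
open scoped BigOperators

/-! Normalize the coefficient vectors to the unit sphere. The nonnegativity constraint cuts out a
compact subset of that sphere, and at `w̄` the combination vanishes nowhere on it. By continuity
and compactness (the tube lemma) the same holds for all `w` near `w̄`, and a vanishing
combination with nonzero coefficients would rescale to one on the sphere. -/

open Filter Topology Function

section Cone

variable {X E V : Type*} [TopologicalSpace X]
  [NormedAddCommGroup E] [NormedSpace ℝ E] [ProperSpace E]
  [AddCommGroup V] [Module ℝ V] [TopologicalSpace V] [T1Space V]

theorem eventually_forall_mem_cone_ne_zero
    {K : Set E} (hK : IsClosed K) (hKcone : ∀ p ∈ K, ∀ c : ℝ, 0 < c → c • p ∈ K)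
    {f : X → E → V} (hf : Continuous (uncurry f))
    (hhom : ∀ x p (c : ℝ), 0 < c → f x (c • p) = c • f x p)
    {x₀ : X} (h₀ : ∀ p ∈ K, p ≠ 0 → f x₀ p ≠ 0) :
    ∀ᶠ x in 𝓝 x₀, ∀ p ∈ K, p ≠ 0 → f x p ≠ 0 := by
  have hS : IsCompact (Metric.sphere (0 : E) 1 ∩ K) := (isCompact_sphere 0 1).inter_right hK
  have hsphere : ∀ᶠ x in 𝓝 x₀, ∀ p ∈ Metric.sphere (0 : E) 1 ∩ K, f x p ≠ 0 := by
    refine hS.eventually_forall_of_forall_eventually fun p ⟨hp1, hpK⟩ => ?_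
    have hp : p ≠ 0 := ne_zero_of_mem_unit_sphere ⟨p, hp1⟩
    exact (isOpen_compl_singleton.preimage hf).mem_nhds (h₀ p hpK hp)
  filter_upwards [hsphere] with x hx p hpK hp hfp
  have hnorm : 0 < ‖p‖⁻¹ := inv_pos.2 (norm_pos_iff.2 hp)
  refine hx (‖p‖⁻¹ • p) ⟨?_, hKcone p hpK _ hnorm⟩ ?_
  · rw [mem_sphere_zero_iff_norm, norm_smul, norm_inv, norm_norm,
      inv_mul_cancel₀ (norm_ne_zero_iff.2 hp)]
  · rw [hhom x p _ hnorm, hfp, smul_zero]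

end Cone

section LinComb

variable {ι κ X V : Type*} [Fintype ι] [Fintype κ] [AddCommGroup V] [Module ℝ V]

def linCombPair (G : ι → X → V) (H : κ → X → V) (x : X) (p : (ι → ℝ) × (κ → ℝ)) : V :=
  ∑ i, p.1 i • G i x + ∑ j, p.2 j • H j x

theorem linCombPair_smul (G : ι → X → V) (H : κ → X → V) (x : X) (c : ℝ)
    (p : (ι → ℝ) × (κ → ℝ)) : linCombPair G H x (c • p) = c • linCombPair G H x p := by
  simp only [linCombPair, Prod.smul_fst, Prod.smul_snd, Pi.smul_apply, smul_eq_mul, smul_add,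
    Finset.smul_sum, smul_smul]

theorem continuous_uncurry_linCombPair [TopologicalSpace X] [TopologicalSpace V]
    [ContinuousAdd V] [ContinuousSMul ℝ V]
    {G : ι → X → V} {H : κ → X → V} (hG : ∀ i, Continuous (G i)) (hH : ∀ j, Continuous (H j)) :
    Continuous (uncurry (linCombPair G H)) := by
  unfold linCombPair uncurry
  fun_prop

end LinComb

/-- Stability of positive-linear independence: if the continuous vector
fields `G₁,…,G_l, H₁,…,H_r` are positive-linearly independent at `w̄`, then
they are positive-linearly independent at every point of some neighborhood
of `w̄`. -/
theorem posLinIndep_stable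
    {N l r : ℕ}
    (G : Fin l → (Fin N → ℝ) → (Fin N → ℝ))
    (H : Fin r → (Fin N → ℝ) → (Fin N → ℝ))
    (hG : ∀ i, Continuous (G i))
    (hH : ∀ j, Continuous (H j))
    (wbar : Fin N → ℝ)
    -- positive-linear independence at w̄
    (hind : ∀ (α : Fin l → ℝ) (β : Fin r → ℝ), (∀ i, 0 ≤ α i) →
      (∑ i, α i • G i wbar) + (∑ j, β j • H j wbar) = 0 → α = 0 ∧ β = 0) :
    ∃ U ∈ nhds wbar, ∀ w ∈ U,
      ∀ (α : Fin l → ℝ) (β : Fin r → ℝ), (∀ i, 0 ≤ α i) →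
        (∑ i, α i • G i w) + (∑ j, β j • H j w) = 0 → α = 0 ∧ β = 0 := by
  set K : Set ((Fin l → ℝ) × (Fin r → ℝ)) := {p | 0 ≤ p.1}
  have hK : IsClosed K := isClosed_le continuous_const continuous_fst
  have hKcone : ∀ p ∈ K, ∀ c : ℝ, 0 < c → c • p ∈ K :=
    fun p hp c hc => show 0 ≤ c • p.1 from smul_nonneg hc.le hp
  have h₀ : ∀ p ∈ K, p ≠ 0 → linCombPair G H wbar p ≠ 0 :=
    fun p hp hne h0 => hne (Prod.ext_iff.2 (hind p.1 p.2 hp h0))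
  refine ⟨_, eventually_forall_mem_cone_ne_zero hK hKcone (continuous_uncurry_linCombPair hG hH)
    (fun x p c _ => linCombPair_smul G H x c p) h₀, fun w hw α β hα hsum => ?_⟩
  by_contra hne
  exact hw (α, β) hα (fun h => hne (Prod.ext_iff.1 h)) hsum
end

section
/- (Stability of CPLD) Consider a constrained optimization problem with C¹ inequality constraints G_i(w) ≤ 0 (i ∈ I) and equality constraints H_j(w) = 0 (j ∈ J), with finite index sets. If the constant positive linear dependence condition (CPLD) holds at a feasible point w̄, then there exists a neighborhood Ū of w̄ such that CPLD holds at every feasible point in Ū. -/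
open scoped BigOperators

/-- Positive-linear dependence of the gradients of the constraints indexed by
`I₀`, `J₀` at the point `w`. -/
def PosLinDepAt {N l r : ℕ}
    (G : Fin l → (Fin N → ℝ) → ℝ) (H : Fin r → (Fin N → ℝ) → ℝ)
    (I0 : Finset (Fin l)) (J0 : Finset (Fin r)) (w : Fin N → ℝ) : Prop :=
  ∃ (α : Fin l → ℝ) (β : Fin r → ℝ),
    (∀ i, 0 ≤ α i) ∧ (∀ i ∉ I0, α i = 0) ∧ (∀ j ∉ J0, β j = 0) ∧
    (α ≠ 0 ∨ β ≠ 0) ∧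
    (∑ i, α i • fderiv ℝ (G i) w) + (∑ j, β j • fderiv ℝ (H j) w) = 0

/-- Linear dependence of the gradients of the constraints indexed by
`I₀`, `J₀` at the point `w`. -/
def LinDepAt {N l r : ℕ}
    (G : Fin l → (Fin N → ℝ) → ℝ) (H : Fin r → (Fin N → ℝ) → ℝ)
    (I0 : Finset (Fin l)) (J0 : Finset (Fin r)) (w : Fin N → ℝ) : Prop :=
  ∃ (α : Fin l → ℝ) (β : Fin r → ℝ),
    (∀ i ∉ I0, α i = 0) ∧ (∀ j ∉ J0, β j = 0) ∧
    (α ≠ 0 ∨ β ≠ 0) ∧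
    (∑ i, α i • fderiv ℝ (G i) w) + (∑ j, β j • fderiv ℝ (H j) w) = 0

/-- The constant positive linear dependence condition (CPLD) at a feasible
point `w` of the system `G ≤ 0`, `H = 0`. -/
def CPLDAt {N l r : ℕ}
    (G : Fin l → (Fin N → ℝ) → ℝ) (H : Fin r → (Fin N → ℝ) → ℝ)
    (w : Fin N → ℝ) : Prop :=
  ∀ (I0 : Finset (Fin l)) (J0 : Finset (Fin r)),
    (∀ i ∈ I0, G i w = 0) →
    PosLinDepAt G H I0 J0 w →
    ∃ U ∈ nhds w, ∀ w' ∈ U, LinDepAt G H I0 J0 w'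

/-!
For each of the finitely many index pairs `(I₀, J₀)` one of three things happens near `w̄`.
If some `i ∈ I₀` is inactive at `w̄`, it stays inactive nearby, so the pair imposes nothing.
If the gradients are positive-linearly dependent at `w̄`, CPLD at `w̄` gives linear dependence on
an open set around `w̄`, which is a neighbourhood of each of its points. Otherwise positive-linear
independence persists near `w̄`: it says that a continuously varying linear map has no zero on the
compact base `C ∩ S` of the closed cone `C` of admissible multipliers, and by the tube lemma this
survives small perturbations. The intersection of the finitely many neighbourhoods is `Ū`.
-/

open Filter Topology

theorem ContinuousAt.eventually_cone_inter_ker_trivial {E F X : Type*}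
    [NormedAddCommGroup E] [NormedSpace ℝ E] [FiniteDimensional ℝ E]
    [NormedAddCommGroup F] [NormedSpace ℝ F] [TopologicalSpace X]
    {C : Set E} (hC : IsClosed C) (hC_smul : ∀ c : ℝ, 0 < c → ∀ p ∈ C, c • p ∈ C)
    {Φ : X → E →L[ℝ] F} {x₀ : X} (hΦ : ContinuousAt Φ x₀)
    (h₀ : ∀ p ∈ C, Φ x₀ p = 0 → p = 0) :
    ∀ᶠ x in 𝓝 x₀, ∀ p ∈ C, Φ x p = 0 → p = 0 := by
  have hK : IsCompact (C ∩ Metric.sphere 0 1) := (isCompact_sphere 0 1).inter_left hC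
  have hK_ne : ∀ᶠ x in 𝓝 x₀, ∀ p ∈ C ∩ Metric.sphere 0 1, Φ x p ≠ 0 := by
    refine hK.eventually_forall_of_forall_eventually fun p hp => ?_
    have hcont : ContinuousAt (fun z : X × E => Φ z.1 z.2) (x₀, p) :=
      (hΦ.comp continuousAt_fst).clm_apply continuousAt_snd
    exact hcont.eventually_ne fun h => Metric.ne_of_mem_sphere hp.2 one_ne_zero (h₀ p hp.1 h)
  filter_upwards [hK_ne] with x hx p hp hΦp
  by_contra hp0
  refine hx (‖p‖⁻¹ • p) ⟨hC_smul _ (by positivity) p hp, ?_⟩ (by simp [hΦp])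
  simp [norm_smul, hp0]

section Constraints

variable {N l r : ℕ} (G : Fin l → (Fin N → ℝ) → ℝ) (H : Fin r → (Fin N → ℝ) → ℝ)

def multiplierCone (I0 : Finset (Fin l)) (J0 : Finset (Fin r)) :
    Set ((Fin l → ℝ) × (Fin r → ℝ)) :=
  {p | (∀ i, 0 ≤ p.1 i) ∧ (∀ i ∉ I0, p.1 i = 0) ∧ (∀ j ∉ J0, p.2 j = 0)}

theorem isClosed_multiplierCone (I0 : Finset (Fin l)) (J0 : Finset (Fin r)) :
    IsClosed (multiplierCone I0 J0) := by
  simp only [multiplierCone, Set.ofPred_and, Set.ofPred_forall]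
  refine .inter (isClosed_iInter fun i => isClosed_le continuous_const (by fun_prop))
    (.inter (isClosed_iInter fun i => isClosed_iInter fun _ =>
        isClosed_eq (by fun_prop) continuous_const)
      (isClosed_iInter fun j => isClosed_iInter fun _ =>
        isClosed_eq (by fun_prop) continuous_const))

theorem smul_mem_multiplierCone {I0 : Finset (Fin l)} {J0 : Finset (Fin r)} {c : ℝ} (hc : 0 ≤ c)
    {p : (Fin l → ℝ) × (Fin r → ℝ)} (hp : p ∈ multiplierCone I0 J0) :
    c • p ∈ multiplierCone I0 J0 := by
  obtain ⟨hnonneg, hI, hJ⟩ := hp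
  exact ⟨fun i => mul_nonneg hc (hnonneg i), fun i hi => by simp [hI i hi],
    fun j hj => by simp [hJ j hj]⟩

noncomputable def gradientCombination (w : Fin N → ℝ) :
    ((Fin l → ℝ) × (Fin r → ℝ)) →L[ℝ] ((Fin N → ℝ) →L[ℝ] ℝ) :=
  ∑ i, ((ContinuousLinearMap.proj i).comp (ContinuousLinearMap.fst ℝ _ _)).smulRight
      (fderiv ℝ (G i) w) +
    ∑ j, ((ContinuousLinearMap.proj j).comp (ContinuousLinearMap.snd ℝ _ _)).smulRight
      (fderiv ℝ (H j) w)

@[simp]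
theorem gradientCombination_apply (w : Fin N → ℝ) (α : Fin l → ℝ) (β : Fin r → ℝ) :
    gradientCombination G H w (α, β) =
      (∑ i, α i • fderiv ℝ (G i) w) + ∑ j, β j • fderiv ℝ (H j) w := by
  simp [gradientCombination]

theorem continuous_gradientCombination (hG : ∀ i, ContDiff ℝ 1 (G i))
    (hH : ∀ j, ContDiff ℝ 1 (H j)) : Continuous (gradientCombination G H) := by
  refine continuous_clm_apply.2 fun ⟨α, β⟩ => ?_
  simp only [gradientCombination_apply]
  have hG' i := (hG i).continuous_fderiv one_ne_zero
  have hH' j := (hH j).continuous_fderiv one_ne_zero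
  fun_prop

theorem posLinDepAt_iff (I0 : Finset (Fin l)) (J0 : Finset (Fin r)) (w : Fin N → ℝ) :
    PosLinDepAt G H I0 J0 w ↔
      ∃ p ∈ multiplierCone I0 J0, p ≠ 0 ∧ gradientCombination G H w p = 0 := by
  simp only [PosLinDepAt, Prod.exists, ne_eq, Prod.mk_eq_zero, not_and_or,
    gradientCombination_apply]
  constructor
  · rintro ⟨α, β, hα, hI, hJ, hne, hsum⟩
    exact ⟨α, β, ⟨hα, hI, hJ⟩, hne, hsum⟩
  · rintro ⟨α, β, ⟨hα, hI, hJ⟩, hne, hsum⟩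
    exact ⟨α, β, hα, hI, hJ, hne, hsum⟩

theorem eventually_not_posLinDepAt (hG : ∀ i, ContDiff ℝ 1 (G i))
    (hH : ∀ j, ContDiff ℝ 1 (H j)) {I0 : Finset (Fin l)} {J0 : Finset (Fin r)}
    {wbar : Fin N → ℝ} (h : ¬ PosLinDepAt G H I0 J0 wbar) :
    ∀ᶠ w in 𝓝 wbar, ¬ PosLinDepAt G H I0 J0 w := by
  simp only [posLinDepAt_iff, not_exists, not_and] at h ⊢
  have hker := (continuous_gradientCombination G H hG hH).continuousAt
    |>.eventually_cone_inter_ker_trivial (isClosed_multiplierCone I0 J0)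
      (fun c hc p hp => smul_mem_multiplierCone hc.le hp)
      fun p hp h0 => by_contra fun hp0 => h p hp hp0 h0
  filter_upwards [hker] with w hw p hp hp0 h0
  exact hp0 (hw p hp h0)

theorem eventually_eventually_linDepAt_of_cpldAt (hG : ∀ i, ContDiff ℝ 1 (G i))
    (hH : ∀ j, ContDiff ℝ 1 (H j)) {wbar : Fin N → ℝ} (hG_wbar : ∀ i, G i wbar ≤ 0)
    (hcpld : CPLDAt G H wbar) (I0 : Finset (Fin l)) (J0 : Finset (Fin r)) :
    ∀ᶠ w in 𝓝 wbar, (∀ i ∈ I0, G i w = 0) → PosLinDepAt G H I0 J0 w →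
      ∀ᶠ w' in 𝓝 w, LinDepAt G H I0 J0 w' := by
  by_cases hact : ∀ i ∈ I0, G i wbar = 0
  · by_cases hpos : PosLinDepAt G H I0 J0 wbar
    · obtain ⟨U, hU, hlin⟩ := hcpld I0 J0 hact hpos
      exact (eventually_eventually_nhds.2 (mem_of_superset hU hlin)).mono fun _ h _ _ => h
    · exact (eventually_not_posLinDepAt G H hG hH hpos).mono fun _ h _ hpos' => (h hpos').elim
  · push Not at hact
    obtain ⟨i, hi, hne⟩ := hact
    have hinactive : G i wbar < 0 := (hG_wbar i).lt_of_ne hne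
    filter_upwards [(hG i).continuous.continuousAt.eventually_lt continuousAt_const hinactive]
      with w hw hact
    exact absurd (hact i hi) hw.ne

end Constraints

/-- Stability of CPLD: if CPLD holds at a feasible point `w̄` of a constraint
system with C¹ data, then it holds at every feasible point in a neighborhood
of `w̄`. -/
theorem cpld_stable
    {N l r : ℕ}
    (G : Fin l → (Fin N → ℝ) → ℝ) (H : Fin r → (Fin N → ℝ) → ℝ)
    (hG : ∀ i, ContDiff ℝ 1 (G i)) (hH : ∀ j, ContDiff ℝ 1 (H j))
    (wbar : Fin N → ℝ)
    (hfeas : (∀ i, G i wbar ≤ 0) ∧ (∀ j, H j wbar = 0))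
    (hcpld : CPLDAt G H wbar) :
    ∃ U ∈ nhds wbar, ∀ w ∈ U,
      ((∀ i, G i w ≤ 0) ∧ (∀ j, H j w = 0)) → CPLDAt G H w := by
  have hall := eventually_all.2 fun I0 => eventually_all.2 fun J0 =>
    eventually_eventually_linDepAt_of_cpldAt G H hG hH hfeas.1 hcpld I0 J0
  exact ⟨_, hall, fun w hw _ I0 J0 hact hpos => ⟨_, hw I0 J0 hact hpos, fun _ h => h⟩⟩
end

section
/- (Convergence of stationary points of the relaxation under CPLD) Let {t_k} ↓ 0 and let w^k be a KKT point of the relaxed problem WDP(t_k): min F₀(w) s.t. G₀(w) ≤ t_k, G_i(w) ≤ 0 (i = 1,…,N_g), H_j(w) = 0 (j = 1,…,N_h), where additionally at each w^k there exist KKT multipliers (λ₀^k, λ^k, μ^k) such that the gradients {∇G_i(w^k) : λ_i^k > 0, 0 ≤ i ≤ N_g} ∪ {∇H_j(w^k) : μ_j^k ≠ 0} are linearly independent. If w^k → w̄ and the limiting problem (with t = 0) satisfies CPLD at w̄, then the multiplier sequence {(λ₀^k, λ^k, μ^k)} is bounded and w̄ is a KKT point of the limiting problem min F₀ s.t. G₀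 ≤ 0, G_i ≤ 0, H_j = 0. -/
open scoped BigOperators

/-!
The relaxed constraint `G₀ ≤ t_k` is `G₀ ≤ 0` shifted by a perturbation that vanishes in the
limit, so feasibility, stationarity, sign and complementarity all pass to the limit along a
subsequence as soon as the multipliers are bounded. If they were not, the normalized multipliers
would have a limit of norm one which, by the same passage to the limit with the objective
weighted by `‖(λᵏ, μᵏ)‖⁻¹ → 0`, is a positive linear dependence of gradients of constraints
active at `w̄`. CPLD keeps these gradients linearly dependent near `w̄`, but for large `k` they
are supported on the nonzero multipliers at `wᵏ`, whose gradients are linearly independent.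
-/

open Filter Topology Bornology Set

theorem frequently_lt_norm_of_not_isBounded_range {V : Type*} [NormedAddCommGroup V]
    {p : ℕ → V} (hp : ¬IsBounded (range p)) (C : ℝ) : ∃ᶠ k in atTop, C < ‖p k‖ := by
  contrapose! hp
  obtain ⟨B, hB⟩ := (isBoundedUnder_of_eventually_le hp).bddAbove_range
  exact isBounded_iff_forall_norm_le.2 ⟨B, forall_mem_range.2 fun k => hB (mem_range_self k)⟩

theorem exists_subseq_tendsto_norm_atTop {V : Type*} [NormedAddCommGroup V] {p : ℕ → V}
    (hp : ¬IsBounded (range p)) :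
    ∃ φ : ℕ → ℕ, StrictMono φ ∧ Tendsto (fun n => ‖p (φ n)‖) atTop atTop := by
  obtain ⟨φ, hφ, hlt⟩ := extraction_forall_of_frequently fun n : ℕ =>
    frequently_lt_norm_of_not_isBounded_range hp n
  exact ⟨φ, hφ, tendsto_atTop_mono (fun n => (hlt n).le) tendsto_natCast_atTop_atTop⟩

theorem exists_subseq_tendsto_inv_norm_smul {V : Type*} [NormedAddCommGroup V]
    [NormedSpace ℝ V] [ProperSpace V] {p : ℕ → V} (hp : ¬IsBounded (range p)) :
    ∃ φ : ℕ → ℕ, StrictMono φ ∧ Tendsto (fun n => ‖p (φ n)‖) atTop atTop ∧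
      ∃ q : V, ‖q‖ = 1 ∧ Tendsto (fun n => ‖p (φ n)‖⁻¹ • p (φ n)) atTop (𝓝 q) := by
  obtain ⟨φ, hφ, htop⟩ := exists_subseq_tendsto_norm_atTop hp
  have hsphere : ∀ᶠ n in atTop, ‖p (φ n)‖⁻¹ • p (φ n) ∈ Metric.sphere (0 : V) 1 :=
    (htop.eventually_gt_atTop 0).mono fun n hn => by simp [norm_smul, hn.ne']
  obtain ⟨q, hq, ψ, hψ, hlim⟩ :=
    tendsto_subseq_of_frequently_bounded Metric.isBounded_sphere hsphere.frequently
  rw [Metric.isClosed_sphere.closure_eq, mem_sphere_zero_iff_norm] at hq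
  exact ⟨φ ∘ ψ, hφ.comp hψ, htop.comp hψ.tendsto_atTop, q, hq, hlim⟩

theorem eventually_apply_ne_zero_of_tendsto_smul {ι α : Type*} {l : Filter α} {c : α → ℝ}
    {x : α → ι → ℝ} {xbar : ι → ℝ} (h : Tendsto (fun k => c k • x k) l (𝓝 xbar)) {i : ι}
    (hi : xbar i ≠ 0) : ∀ᶠ k in l, x k i ≠ 0 :=
  ((tendsto_pi_nhds.1 h i).eventually_ne hi).mono fun _ hk => right_ne_zero_of_mul hk

theorem feasible_of_tendsto {E ι ι' α : Type*} [TopologicalSpace E] {l : Filter α} [l.NeBot]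
    {G : ι → E → ℝ} {H : ι' → E → ℝ} {w : α → E} {wbar : E} {s : α → ι → ℝ}
    (hG : ∀ i, Continuous (G i)) (hH : ∀ j, Continuous (H j))
    (hw : Tendsto w l (𝓝 wbar)) (hs : Tendsto s l (𝓝 0))
    (hfeasG : ∀ k i, G i (w k) ≤ s k i) (hfeasH : ∀ k j, H j (w k) = 0) :
    (∀ i, G i wbar ≤ 0) ∧ ∀ j, H j wbar = 0 :=
  ⟨fun i => le_of_tendsto_of_tendsto' (((hG i).tendsto wbar).comp hw) (tendsto_pi_nhds.1 hs i)
      fun k => hfeasG k i,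
    fun j => tendsto_nhds_unique (((hH j).tendsto wbar).comp hw)
      (tendsto_const_nhds.congr fun k => (hfeasH k j).symm)⟩

section KKTLimits

variable {E ι ι' : Type*} [NormedAddCommGroup E] [NormedSpace ℝ E] [Fintype ι] [Fintype ι']
  {F0 : E → ℝ} {G : ι → E → ℝ} {H : ι' → E → ℝ}

theorem tendsto_sum_smul_fderiv {α : Type*} {l : Filter α} {f : ι → E → ℝ}
    (hf : ∀ i, ContDiff ℝ 1 (f i)) {w : α → E} {wbar : E} (hw : Tendsto w l (𝓝 wbar))
    {c : α → ι → ℝ} {cbar : ι → ℝ} (hc : Tendsto c l (𝓝 cbar)) :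
    Tendsto (fun k => ∑ i, c k i • fderiv ℝ (f i) (w k)) l
      (𝓝 (∑ i, cbar i • fderiv ℝ (f i) wbar)) :=
  tendsto_finsetSum _ fun i _ => (tendsto_pi_nhds.1 hc i).smul
    ((((hf i).continuous_fderiv one_ne_zero).tendsto wbar).comp hw)

/-- With `c = 1` this passes the KKT conditions to the limit; with `c k → 0` it turns
blowing-up multipliers into a nonzero multiplier for the constraints alone. -/
theorem scaled_kkt_of_tendsto_smul {α : Type*} {l : Filter α} [l.NeBot]
    (hF0 : ContDiff ℝ 1 F0) (hG : ∀ i, ContDiff ℝ 1 (G i)) (hH : ∀ j, ContDiff ℝ 1 (H j))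
    {w : α → E} {wbar : E} (hw : Tendsto w l (𝓝 wbar))
    {s lam : α → ι → ℝ} {mu : α → ι' → ℝ} (hs : Tendsto s l (𝓝 0))
    {c : α → ℝ} {cbar : ℝ} {lamb : ι → ℝ} {mub : ι' → ℝ} (hc : Tendsto c l (𝓝 cbar))
    (hc0 : ∀ k, 0 ≤ c k) (hlam : Tendsto (fun k => c k • lam k) l (𝓝 lamb))
    (hmu : Tendsto (fun k => c k • mu k) l (𝓝 mub))
    (hstat : ∀ k, fderiv ℝ F0 (w k) + (∑ i, lam k i • fderiv ℝ (G i) (w k)) +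
      (∑ j, mu k j • fderiv ℝ (H j) (w k)) = 0)
    (hlampos : ∀ k i, 0 ≤ lam k i) (hcomp : ∀ k i, lam k i * (G i (w k) - s k i) = 0) :
    cbar • fderiv ℝ F0 wbar + (∑ i, lamb i • fderiv ℝ (G i) wbar) +
        (∑ j, mub j • fderiv ℝ (H j) wbar) = 0 ∧
      (∀ i, 0 ≤ lamb i) ∧ ∀ i, lamb i * G i wbar = 0 := by
  refine ⟨?_, fun i => ?_, fun i => ?_⟩
  · have hF : Tendsto (fun k => fderiv ℝ F0 (w k)) l (𝓝 (fderiv ℝ F0 wbar)) :=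
      ((hF0.continuous_fderiv one_ne_zero).tendsto wbar).comp hw
    refine tendsto_nhds_unique (((hc.smul hF).add (tendsto_sum_smul_fderiv hG hw hlam)).add
      (tendsto_sum_smul_fderiv hH hw hmu)) (tendsto_const_nhds.congr fun k => ?_)
    rw [← smul_zero (c k), ← hstat k]
    simp only [smul_add, Finset.smul_sum, smul_smul, Pi.smul_apply, smul_eq_mul]
  · exact ge_of_tendsto' (tendsto_pi_nhds.1 hlam i) fun k => mul_nonneg (hc0 k) (hlampos k i)
  · have hGi : Tendsto (fun k => G i (w k) - s k i) l (𝓝 (G i wbar - 0)) :=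
      (((hG i).continuous.tendsto wbar).comp hw).sub (tendsto_pi_nhds.1 hs i)
    refine sub_zero (G i wbar) ▸ tendsto_nhds_unique ((tendsto_pi_nhds.1 hlam i).mul hGi) ?_
    simp only [Pi.smul_apply, smul_eq_mul, mul_assoc, hcomp, mul_zero, tendsto_const_nhds]

theorem exists_kkt_multipliers_of_isBounded
    (hF0 : ContDiff ℝ 1 F0) (hG : ∀ i, ContDiff ℝ 1 (G i)) (hH : ∀ j, ContDiff ℝ 1 (H j))
    {w : ℕ → E} {wbar : E} (hw : Tendsto w atTop (𝓝 wbar))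
    {s lam : ℕ → ι → ℝ} {mu : ℕ → ι' → ℝ} (hs : Tendsto s atTop (𝓝 0))
    (hbdd : IsBounded (range fun k => (lam k, mu k)))
    (hstat : ∀ k, fderiv ℝ F0 (w k) + (∑ i, lam k i • fderiv ℝ (G i) (w k)) +
      (∑ j, mu k j • fderiv ℝ (H j) (w k)) = 0)
    (hlampos : ∀ k i, 0 ≤ lam k i) (hcomp : ∀ k i, lam k i * (G i (w k) - s k i) = 0) :
    ∃ (lamb : ι → ℝ) (mub : ι' → ℝ),
      fderiv ℝ F0 wbar + (∑ i, lamb i • fderiv ℝ (G i) wbar) +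
          (∑ j, mub j • fderiv ℝ (H j) wbar) = 0 ∧
        (∀ i, 0 ≤ lamb i) ∧ ∀ i, lamb i * G i wbar = 0 := by
  obtain ⟨q, -, φ, hφ, hq⟩ := tendsto_subseq_of_bounded hbdd fun k => mem_range_self k
  have hlamq : Tendsto (fun n => (1 : ℝ) • lam (φ n)) atTop (𝓝 q.1) :=
    ((continuous_fst.tendsto q).comp hq).congr fun n => (one_smul ℝ _).symm
  have hmuq : Tendsto (fun n => (1 : ℝ) • mu (φ n)) atTop (𝓝 q.2) :=
    ((continuous_snd.tendsto q).comp hq).congr fun n => (one_smul ℝ _).symm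
  obtain ⟨hstat', hnonneg, hcompl⟩ := scaled_kkt_of_tendsto_smul hF0 hG hH
    (hw.comp hφ.tendsto_atTop) (hs.comp hφ.tendsto_atTop) tendsto_const_nhds
    (fun _ => zero_le_one) hlamq hmuq (fun n => hstat (φ n)) (fun n => hlampos (φ n))
    fun n => hcomp (φ n)
  exact ⟨q.1, q.2, by simpa using hstat', hnonneg, hcompl⟩

end KKTLimits

section CPLD

variable {N l r : ℕ} {G : Fin l → (Fin N → ℝ) → ℝ} {H : Fin r → (Fin N → ℝ) → ℝ}
  {I0 : Finset (Fin l)} {J0 : Finset (Fin r)}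

theorem CPLDAt.eventually_linDepAt {α : Type*} {f : Filter α} {w : α → Fin N → ℝ}
    {wbar : Fin N → ℝ} (h : CPLDAt G H wbar) (hact : ∀ i ∈ I0, G i wbar = 0)
    (hpos : PosLinDepAt G H I0 J0 wbar) (hw : Tendsto w f (𝓝 wbar)) :
    ∀ᶠ k in f, LinDepAt G H I0 J0 (w k) :=
  let ⟨_, hU, hdep⟩ := h I0 J0 hact hpos
  (hw.eventually_mem hU).mono fun _ hk => hdep _ hk

theorem not_linDepAt_of_linearIndependent_on_support {lam : Fin l → ℝ} {mu : Fin r → ℝ}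
    {w : Fin N → ℝ}
    (hli : ∀ (c : Fin l → ℝ) (d : Fin r → ℝ), (∀ i, c i ≠ 0 → 0 < lam i) →
      (∀ j, d j ≠ 0 → mu j ≠ 0) →
      (∑ i, c i • fderiv ℝ (G i) w) + (∑ j, d j • fderiv ℝ (H j) w) = 0 → c = 0 ∧ d = 0)
    (hI : ∀ i ∈ I0, 0 < lam i) (hJ : ∀ j ∈ J0, mu j ≠ 0) : ¬LinDepAt G H I0 J0 w := by
  rintro ⟨c, d, hc, hd, hne, hsum⟩
  obtain ⟨rfl, rfl⟩ := hli c d (fun i hi => hI i (not_imp_comm.1 (hc i) hi))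
    (fun j hj => hJ j (not_imp_comm.1 (hd j) hj)) hsum
  simp at hne

theorem isBounded_range_multipliers_of_cpldAt {F0 : (Fin N → ℝ) → ℝ}
    (hF0 : ContDiff ℝ 1 F0) (hG : ∀ i, ContDiff ℝ 1 (G i)) (hH : ∀ j, ContDiff ℝ 1 (H j))
    {w : ℕ → Fin N → ℝ} {wbar : Fin N → ℝ} (hw : Tendsto w atTop (𝓝 wbar))
    {s lam : ℕ → Fin l → ℝ} {mu : ℕ → Fin r → ℝ} (hs : Tendsto s atTop (𝓝 0))
    (hstat : ∀ k, fderiv ℝ F0 (w k) + (∑ i, lam k i • fderiv ℝ (G i) (w k)) +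
      (∑ j, mu k j • fderiv ℝ (H j) (w k)) = 0)
    (hlampos : ∀ k i, 0 ≤ lam k i) (hcomp : ∀ k i, lam k i * (G i (w k) - s k i) = 0)
    (hli : ∀ k, ∀ (c : Fin l → ℝ) (d : Fin r → ℝ), (∀ i, c i ≠ 0 → 0 < lam k i) →
      (∀ j, d j ≠ 0 → mu k j ≠ 0) →
      (∑ i, c i • fderiv ℝ (G i) (w k)) + (∑ j, d j • fderiv ℝ (H j) (w k)) = 0 →
      c = 0 ∧ d = 0)
    (hcpld : CPLDAt G H wbar) : IsBounded (range fun k => (lam k, mu k)) := by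
  by_contra hunb
  obtain ⟨σ, hσ, htop, q, hq1, hq⟩ := exists_subseq_tendsto_inv_norm_smul hunb
  have hwσ := hw.comp hσ.tendsto_atTop
  have hlamq : Tendsto (fun m => ‖(lam (σ m), mu (σ m))‖⁻¹ • lam (σ m)) atTop (𝓝 q.1) :=
    (continuous_fst.tendsto q).comp hq
  have hmuq : Tendsto (fun m => ‖(lam (σ m), mu (σ m))‖⁻¹ • mu (σ m)) atTop (𝓝 q.2) :=
    (continuous_snd.tendsto q).comp hq
  obtain ⟨hstat0, hnonneg, hcompl⟩ := scaled_kkt_of_tendsto_smul hF0 hG hH hwσ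
    (hs.comp hσ.tendsto_atTop) (tendsto_inv_atTop_zero.comp htop)
    (fun _ => inv_nonneg.2 (norm_nonneg _)) hlamq hmuq (fun m => hstat (σ m))
    (fun m => hlampos (σ m)) (fun m => hcomp (σ m))
  rw [zero_smul, zero_add] at hstat0
  set I0 := Finset.univ.filter (q.1 · ≠ 0)
  set J0 := Finset.univ.filter (q.2 · ≠ 0)
  have hq0 : q.1 ≠ 0 ∨ q.2 ≠ 0 := by
    by_contra! h
    simp [show q = 0 from Prod.ext h.1 h.2] at hq1
  have hpos : PosLinDepAt G H I0 J0 wbar :=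
    ⟨q.1, q.2, hnonneg, by simp [I0], by simp [J0], hq0, hstat0⟩
  have hact : ∀ i ∈ I0, G i wbar = 0 := fun i hi =>
    (mul_eq_zero.1 (hcompl i)).resolve_left (by simpa [I0] using hi)
  have hsupp : ∀ᶠ m in atTop, (∀ i ∈ I0, 0 < lam (σ m) i) ∧ ∀ j ∈ J0, mu (σ m) j ≠ 0 := by
    refine ((Finset.eventually_all I0).2 fun i hi => ?_).and
      ((Finset.eventually_all J0).2 fun j hj => ?_)
    · exact (eventually_apply_ne_zero_of_tendsto_smul hlamq (by simpa [I0] using hi)).mono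
        fun m hm => (hlampos (σ m) i).lt_of_ne' hm
    · exact eventually_apply_ne_zero_of_tendsto_smul hmuq (by simpa [J0] using hj)
  obtain ⟨m, hdep, hI, hJ⟩ := ((hcpld.eventually_linDepAt hact hpos hwσ).and hsupp).exists
  exact not_linDepAt_of_linearIndependent_on_support (hli (σ m)) hI hJ hdep

end CPLD

theorem relaxation_kkt_limit_under_cpld_general
    {N Ng Nh : ℕ}
    (F0 : (Fin N → ℝ) → ℝ)
    (G : Fin (Ng + 1) → (Fin N → ℝ) → ℝ)
    (H : Fin Nh → (Fin N → ℝ) → ℝ)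
    (hF0 : ContDiff ℝ 1 F0)
    (hG : ∀ i, ContDiff ℝ 1 (G i)) (hH : ∀ j, ContDiff ℝ 1 (H j))
    (t : ℕ → ℝ)
    (ht0 : Filter.Tendsto t Filter.atTop (nhds 0))
    (w : ℕ → Fin N → ℝ)
    (lam : ℕ → Fin (Ng + 1) → ℝ) (mu : ℕ → Fin Nh → ℝ)
    -- feasibility of w^k for WDP(t_k)
    (hfeas : ∀ k, G 0 (w k) ≤ t k ∧ (∀ i, i ≠ 0 → G i (w k) ≤ 0) ∧
      (∀ j, H j (w k) = 0))
    -- KKT conditions at w^k with multipliers (λ₀^k, λ^k, μ^k)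
    (hstat : ∀ k, fderiv ℝ F0 (w k) +
      (∑ i, lam k i • fderiv ℝ (G i) (w k)) +
      (∑ j, mu k j • fderiv ℝ (H j) (w k)) = 0)
    (hlampos : ∀ k i, 0 ≤ lam k i)
    (hcomp0 : ∀ k, lam k 0 * (G 0 (w k) - t k) = 0)
    (hcomp : ∀ k, ∀ i, i ≠ 0 → lam k i * G i (w k) = 0)
    -- the gradients supported on the positive multipliers are linearly
    -- independent (Lemma A.1 of Steffensen–Ulbrich)
    (hli : ∀ k, ∀ (c : Fin (Ng + 1) → ℝ) (d : Fin Nh → ℝ),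
      (∀ i, c i ≠ 0 → 0 < lam k i) → (∀ j, d j ≠ 0 → mu k j ≠ 0) →
      (∑ i, c i • fderiv ℝ (G i) (w k)) + (∑ j, d j • fderiv ℝ (H j) (w k)) = 0 →
      c = 0 ∧ d = 0)
    (wbar : Fin N → ℝ)
    (hconv : Filter.Tendsto w Filter.atTop (nhds wbar))
    -- CPLD holds for the limiting problem at w̄
    (hcpld : CPLDAt G H wbar) :
    -- the multiplier sequence is bounded
    Bornology.IsBounded (Set.range fun k => (lam k, mu k)) ∧
    -- w̄ is a KKT point of the limiting problem
    ((∀ i, G i wbar ≤ 0) ∧ (∀ j, H j wbar = 0) ∧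
      ∃ (lamb : Fin (Ng + 1) → ℝ) (mub : Fin Nh → ℝ),
        fderiv ℝ F0 wbar +
          (∑ i, lamb i • fderiv ℝ (G i) wbar) +
          (∑ j, mub j • fderiv ℝ (H j) wbar) = 0 ∧
        (∀ i, 0 ≤ lamb i) ∧ (∀ i, lamb i * G i wbar = 0)) := by
  set s : ℕ → Fin (Ng + 1) → ℝ := fun k => Pi.single 0 (t k)
  have hs : Tendsto s atTop (𝓝 0) := by
    simpa [s, Function.comp_def] using
      ((continuous_single (A := fun _ : Fin (Ng + 1) => ℝ) 0).tendsto 0).comp ht0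
  have hfeasG : ∀ k i, G i (w k) ≤ s k i := by
    intro k i
    rcases eq_or_ne i 0 with rfl | hi
    · simpa [s] using (hfeas k).1
    · simpa [s, hi] using (hfeas k).2.1 i hi
  have hcomp' : ∀ k i, lam k i * (G i (w k) - s k i) = 0 := by
    intro k i
    rcases eq_or_ne i 0 with rfl | hi
    · simpa [s] using hcomp0 k
    · simpa [s, hi] using hcomp k i hi
  have hbdd := isBounded_range_multipliers_of_cpldAt hF0 hG hH hconv hs hstat hlampos hcomp'
    hli hcpld
  obtain ⟨hGbar, hHbar⟩ := feasible_of_tendsto (fun i => (hG i).continuous)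
    (fun j => (hH j).continuous) hconv hs hfeasG fun k => (hfeas k).2.2
  exact ⟨hbdd, hGbar, hHbar,
    exists_kkt_multipliers_of_isBounded hF0 hG hH hconv hs hbdd hstat hlampos hcomp'⟩

/-- Convergence of KKT points of the relaxation `WDP(t_k)` under CPLD:
the multiplier sequence is bounded and the limit point is a KKT point of the
limiting problem (with `t = 0`).  The inequality constraints are
`G 0 ≤ t_k` (the relaxed one) and `G i ≤ 0` for `i ≠ 0`. -/
theorem relaxation_kkt_limit_under_cpld
    {N Ng Nh : ℕ}
    (F0 : (Fin N → ℝ) → ℝ)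
    (G : Fin (Ng + 1) → (Fin N → ℝ) → ℝ)
    (H : Fin Nh → (Fin N → ℝ) → ℝ)
    (hF0 : ContDiff ℝ 1 F0)
    (hG : ∀ i, ContDiff ℝ 1 (G i)) (hH : ∀ j, ContDiff ℝ 1 (H j))
    (t : ℕ → ℝ) (htpos : ∀ k, 0 < t k) (htanti : StrictAnti t)
    (ht0 : Filter.Tendsto t Filter.atTop (nhds 0))
    (w : ℕ → Fin N → ℝ)
    (lam : ℕ → Fin (Ng + 1) → ℝ) (mu : ℕ → Fin Nh → ℝ)
    -- feasibility of w^k for WDP(t_k)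
    (hfeas : ∀ k, G 0 (w k) ≤ t k ∧ (∀ i, i ≠ 0 → G i (w k) ≤ 0) ∧
      (∀ j, H j (w k) = 0))
    -- KKT conditions at w^k with multipliers (λ₀^k, λ^k, μ^k)
    (hstat : ∀ k, fderiv ℝ F0 (w k) +
      (∑ i, lam k i • fderiv ℝ (G i) (w k)) +
      (∑ j, mu k j • fderiv ℝ (H j) (w k)) = 0)
    (hlampos : ∀ k i, 0 ≤ lam k i)
    (hcomp0 : ∀ k, lam k 0 * (G 0 (w k) - t k) = 0)
    (hcomp : ∀ k, ∀ i, i ≠ 0 → lam k i * G i (w k) = 0)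
    -- the gradients supported on the positive multipliers are linearly
    -- independent (Lemma A.1 of Steffensen–Ulbrich)
    (hli : ∀ k, ∀ (c : Fin (Ng + 1) → ℝ) (d : Fin Nh → ℝ),
      (∀ i, c i ≠ 0 → 0 < lam k i) → (∀ j, d j ≠ 0 → mu k j ≠ 0) →
      (∑ i, c i • fderiv ℝ (G i) (w k)) + (∑ j, d j • fderiv ℝ (H j) (w k)) = 0 →
      c = 0 ∧ d = 0)
    (wbar : Fin N → ℝ)
    (hconv : Filter.Tendsto w Filter.atTop (nhds wbar))
    -- CPLD holds for the limiting problem at w̄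
    (hcpld : CPLDAt G H wbar) :
    -- the multiplier sequence is bounded
    Bornology.IsBounded (Set.range fun k => (lam k, mu k)) ∧
    -- w̄ is a KKT point of the limiting problem
    ((∀ i, G i wbar ≤ 0) ∧ (∀ j, H j wbar = 0) ∧
      ∃ (lamb : Fin (Ng + 1) → ℝ) (mub : Fin Nh → ℝ),
        fderiv ℝ F0 wbar +
          (∑ i, lamb i • fderiv ℝ (G i) wbar) +
          (∑ j, mub j • fderiv ℝ (H j) wbar) = 0 ∧
        (∀ i, 0 ≤ lamb i) ∧ (∀ i, lamb i * G i wbar = 0)) :=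
  relaxation_kkt_limit_under_cpld_general F0 G H hF0 hG hH t ht0 w lam mu hfeas hstat hlampos hcomp0
    hcomp hli wbar hconv hcpld
end
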